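/- Fourier--Motzkin step in the proof of Corollary 1 (case S1 = {11,12}, S2 = {21,22,12}): the projection under (R11,R12,R21,R22) ↦ (R1,R2) = (R11+R12, R21+R22) of the set of nonnegative rate 4-tuples satisfying simultaneously (i) R_T ≤ I(U_T; Y1 | U_{S1\T}, Q) for all T ⊆ S1 = {11,12}, and (ii) R_T ≤ I(U_T; Y2 | U_{S2\T}, Q) for all T ⊆ S2 = {12,21,22}, equals the set of pairs (R1, R2) satisfying R1 ≤ I(X1; Y1|Q), R1 ≤ I(X1; Y1|U12, Q) + I(U12; Y2|X2, Q), R2 ≤ I(X2; Y2|U12, Q), and R1 + R2 ≤ I(X1; Y1|U12, Q) + I(U12, X2; Y2|Q). -/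
import Mathlib


open scoped BigOperators
open Filter

set_option synthInstance.maxSize 4000
set_option synthInstance.maxHeartbeats 1000000
set_option maxHeartbeats 1000000

noncomputable section

/-- Shannon entropy (base 2) of a finitely supported distribution `p`. -/
def ent {α : Type*} [Fintype α] (p : α → ℝ) : ℝ := -∑ a, p a * Real.logb 2 (p a)

/-- The distribution (pushforward) of a random variable `f` on the finite
probability space `(Ω, p)`. -/
def distOf {Ω β : Type*} [Fintype Ω] [DecidableEq β] (p : Ω → ℝ) (f : Ω → β) : β → ℝ :=
  fun b => ∑ ω, if f ω = b then p ω else 0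

/-- The entropy `H(f)` of a random variable `f` on the finite probability space `(Ω, p)`. -/
def entOf {Ω β : Type*} [Fintype Ω] [Fintype β] [DecidableEq β] (p : Ω → ℝ) (f : Ω → β) : ℝ :=
  ent (distOf p f)

/-- The conditional entropy `H(f | g)`. -/
def condEnt {Ω β γ : Type*} [Fintype Ω] [Fintype β] [Fintype γ] [DecidableEq β] [DecidableEq γ]
    (p : Ω → ℝ) (f : Ω → β) (g : Ω → γ) : ℝ :=
  entOf p (fun ω => (f ω, g ω)) - entOf p g

/-- The mutual information `I(f; g)`. -/
def mutInfo {Ω β γ : Type*} [Fintype Ω] [Fintype β] [Fintype γ] [DecidableEq β] [DecidableEq γ]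
    (p : Ω → ℝ) (f : Ω → β) (g : Ω → γ) : ℝ :=
  entOf p f + entOf p g - entOf p (fun ω => (f ω, g ω))

/-- The conditional mutual information `I(f; g | h)`. -/
def condMutInfo {Ω β γ δ : Type*} [Fintype Ω] [Fintype β] [Fintype γ] [Fintype δ]
    [DecidableEq β] [DecidableEq γ] [DecidableEq δ]
    (p : Ω → ℝ) (f : Ω → β) (g : Ω → γ) (h : Ω → δ) : ℝ :=
  entOf p (fun ω => (f ω, h ω)) + entOf p (fun ω => (g ω, h ω)) -
    entOf p (fun ω => (f ω, g ω, h ω)) - entOf p h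

/-- `p` is a probability mass function on the finite alphabet `α`. -/
def IsPMF {α : Type*} [Fintype α] (p : α → ℝ) : Prop := (∀ a, 0 ≤ p a) ∧ ∑ a, p a = 1

set_option linter.unusedSectionVars false

section General
variable {Ω α β γ δ : Type*} [Fintype Ω] [Fintype α] [Fintype β] [Fintype γ] [Fintype δ]
  [DecidableEq α] [DecidableEq β] [DecidableEq γ] [DecidableEq δ]
variable (p : Ω → ℝ)

lemma distOf_nonneg (hp : ∀ ω, 0 ≤ p ω) (f : Ω → β) (b : β) : 0 ≤ distOf p f b := by
  unfold distOf; exact Finset.sum_nonneg fun ω _ => by split <;> simp [hp ω]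

lemma sum_distOf (f : Ω → β) : ∑ b, distOf p f b = ∑ ω, p ω := by
  unfold distOf
  rw [Finset.sum_comm]
  exact Finset.sum_congr rfl fun ω _ => by simp

lemma distOf_map (f : Ω → β) (m : β → γ) (c : γ) :
    distOf p (fun ω => m (f ω)) c = ∑ b, if m b = c then distOf p f b else 0 := by
  unfold distOf
  have key : ∀ b : β, (if m b = c then ∑ ω, if f ω = b then p ω else 0 else 0)
      = ∑ ω, if f ω = b then (if m (f ω) = c then p ω else 0) else 0 := by
    intro b
    split_ifs with h
    · exact Finset.sum_congr rfl fun ω _ => by split_ifs with h2 <;> simp_all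
    · exact (Finset.sum_eq_zero fun ω _ => by split_ifs with h2 <;> simp_all).symm
  simp only [key]
  rw [Finset.sum_comm]
  exact Finset.sum_congr rfl fun ω _ => by simp

lemma distOf_comp_inj {e : β → γ} (he : Function.Injective e) (F : Ω → γ) (f : Ω → β)
    (hF : ∀ ω, F ω = e (f ω)) (b : β) : distOf p F (e b) = distOf p f b := by
  unfold distOf
  refine Finset.sum_congr rfl fun ω _ => ?_
  rw [hF ω]
  simp [he.eq_iff]

lemma entOf_comp_inj {e : β → γ} (he : Function.Injective e) (F : Ω → γ) (f : Ω → β)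
    (hF : ∀ ω, F ω = e (f ω)) : entOf p F = entOf p f := by
  unfold entOf ent
  congr 1
  rw [← Finset.sum_subset (Finset.subset_univ ((Finset.univ : Finset β).image e))]
  · rw [Finset.sum_image (fun x _ y _ h => he h)]
    exact Finset.sum_congr rfl fun b _ => by rw [distOf_comp_inj p he F f hF]
  · intro c _ hc
    have : distOf p F c = 0 := by
      unfold distOf
      refine Finset.sum_eq_zero fun ω _ => ?_
      have : F ω ≠ c := by
        rw [hF ω]; intro h; exact hc (Finset.mem_image.2 ⟨f ω, Finset.mem_univ _, h⟩)
      simp [this]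
    simp [this]

/-- marginalizing out the first coordinate -/
lemma distOf_snd_marg (u : Ω → β) (v : Ω → α) (a : α) :
    distOf p v a = ∑ y, distOf p (fun ω => (u ω, v ω)) (y, a) := by
  unfold distOf
  rw [Finset.sum_comm]
  refine Finset.sum_congr rfl fun ω _ => ?_
  simp only [Prod.mk.injEq]
  rw [Finset.sum_eq_single (u ω)] <;> simp +contextual [eq_comm]

/-- marginalizing out the second coordinate -/
lemma distOf_fst_marg (u : Ω → β) (v : Ω → α) (b : β) :
    distOf p u b = ∑ a, distOf p (fun ω => (u ω, v ω)) (b, a) := by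
  unfold distOf
  rw [Finset.sum_comm]
  refine Finset.sum_congr rfl fun ω _ => ?_
  simp only [Prod.mk.injEq]
  rw [Finset.sum_eq_single (v ω)] <;> simp +contextual [eq_comm]

end General

section General2
variable {Ω α β γ δ : Type*} [Fintype Ω] [Fintype α] [Fintype β] [Fintype γ] [Fintype δ]
  [DecidableEq α] [DecidableEq β] [DecidableEq γ] [DecidableEq δ]
variable (p : Ω → ℝ)

lemma mul_mul_logb (x y : ℝ) :
    x * y * Real.logb 2 (x * y) = x * y * Real.logb 2 x + x * y * Real.logb 2 y := by
  rcases eq_or_ne x 0 with hx | hx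
  · simp [hx]
  rcases eq_or_ne y 0 with hy | hy
  · simp [hy]
  rw [Real.logb, Real.logb, Real.logb, Real.log_mul hx hy]
  ring

lemma condEnt_eq_sum (Y : Ω → β) (A : Ω → α) (k : α → β → ℝ)
    (hk : ∀ a y, distOf p (fun ω => (Y ω, A ω)) (y, a) = distOf p A a * k a y) :
    condEnt p Y A = ∑ a, distOf p A a * (-∑ y, k a y * Real.logb 2 (k a y)) := by
  have hmar : ∀ a, ∑ y, distOf p A a * k a y = distOf p A a := by
    intro a
    have := distOf_snd_marg p Y A a
    simp only [hk] at this
    exact this.symm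
  unfold condEnt entOf ent
  rw [Fintype.sum_prod_type, Finset.sum_comm]
  simp only [hk, mul_mul_logb]
  have key : ∀ a, ∑ y, ((distOf p A a * k a y) * Real.logb 2 (distOf p A a)
      + (distOf p A a * k a y) * Real.logb 2 (k a y))
      = distOf p A a * Real.logb 2 (distOf p A a)
        + distOf p A a * ∑ y, k a y * Real.logb 2 (k a y) := by
    intro a
    rw [Finset.sum_add_distrib, ← Finset.sum_mul, hmar a, Finset.mul_sum]
    simp [mul_assoc]
  simp only [key]
  rw [Finset.sum_add_distrib]
  simp only [mul_neg, Finset.sum_neg_distrib]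
  ring

end General2

section General3
variable {Ω α β γ δ : Type*} [Fintype Ω] [Fintype α] [Fintype β] [Fintype γ] [Fintype δ]
  [DecidableEq α] [DecidableEq β] [DecidableEq γ] [DecidableEq δ]
variable (p : Ω → ℝ)

lemma condEnt_comp (Y : Ω → β) (A : Ω → α) (A' : Ω → γ) (φ : α → γ)
    (hA' : ∀ ω, A' ω = φ (A ω)) (k : γ → β → ℝ)
    (hk : ∀ a y, distOf p (fun ω => (Y ω, A ω)) (y, a) = distOf p A a * k (φ a) y) :
    condEnt p Y A = condEnt p Y A' := by
  have hAfun : A' = fun ω => φ (A ω) := funext hA'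
  subst hAfun
  have hdA' : ∀ c, distOf p (fun ω => φ (A ω)) c
      = ∑ a, if φ a = c then distOf p A a else 0 := fun c => distOf_map p A φ c
  have hk' : ∀ c y, distOf p (fun ω => (Y ω, φ (A ω))) (y, c)
      = distOf p (fun ω => φ (A ω)) c * k c y := by
    intro c y
    have h1 : distOf p (fun ω => (Y ω, φ (A ω))) (y, c)
        = ∑ x : β × α, if (Prod.map id φ) x = (y, c)
            then distOf p (fun ω => (Y ω, A ω)) x else 0 :=
      distOf_map p (fun ω => (Y ω, A ω)) (Prod.map id φ) (y, c)
    rw [h1, Fintype.sum_prod_type]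
    rw [Finset.sum_eq_single y]
    · rw [hdA', Finset.sum_mul]
      refine Finset.sum_congr rfl fun a _ => ?_
      simp only [Prod.map, id, Prod.mk.injEq, true_and]
      split_ifs with h
      · rw [hk, h]
      · simp
    · intro b _ hb
      refine Finset.sum_eq_zero fun a _ => ?_
      simp [Prod.map, hb]
    · simp
  rw [condEnt_eq_sum p Y A (fun a => k (φ a)) hk,
    condEnt_eq_sum p Y (fun ω => φ (A ω)) k hk']
  simp only [hdA', Finset.sum_mul]
  rw [Finset.sum_comm]
  refine Finset.sum_congr rfl fun a _ => ?_
  rw [Finset.sum_eq_single (φ a)]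
  · simp
  · intro b _ hb
    simp [Ne.symm hb]
  · simp

end General3

section General4
variable {Ω α β γ δ ε : Type*} [Fintype Ω] [Fintype α] [Fintype β] [Fintype γ] [Fintype δ]
  [Fintype ε] [DecidableEq α] [DecidableEq β] [DecidableEq γ] [DecidableEq δ] [DecidableEq ε]
variable (p : Ω → ℝ)

lemma condMutInfo_eq (f : Ω → β) (g : Ω → γ) (h : Ω → δ) :
    condMutInfo p f g h = condEnt p g h - condEnt p g (fun ω => (f ω, h ω)) := by
  unfold condMutInfo condEnt
  have e1 : entOf p (fun ω => (g ω, (f ω, h ω))) = entOf p (fun ω => (f ω, g ω, h ω)) := by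
    refine entOf_comp_inj p (e := fun x : β × γ × δ => (x.2.1, (x.1, x.2.2))) ?_ _ _
      (fun ω => rfl)
    intro x y hxy
    simp only [Prod.mk.injEq] at hxy
    exact Prod.ext hxy.2.1 (Prod.ext hxy.1 hxy.2.2)
  rw [e1]
  ring

lemma condMutInfo_congr {β' γ' δ' : Type*} [Fintype β'] [Fintype γ'] [Fintype δ']
    [DecidableEq β'] [DecidableEq γ'] [DecidableEq δ']
    (f : Ω → β) (g : Ω → γ) (h : Ω → δ) (f' : Ω → β') (g' : Ω → γ') (h' : Ω → δ')
    {e1 : β → β'} {e2 : γ → γ'} {e3 : δ → δ'}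
    (he1 : Function.Injective e1) (he2 : Function.Injective e2) (he3 : Function.Injective e3)
    (hf : ∀ ω, f' ω = e1 (f ω)) (hg : ∀ ω, g' ω = e2 (g ω)) (hh : ∀ ω, h' ω = e3 (h ω)) :
    condMutInfo p f' g' h' = condMutInfo p f g h := by
  unfold condMutInfo
  have E1 : entOf p (fun ω => (f' ω, h' ω)) = entOf p (fun ω => (f ω, h ω)) :=
    entOf_comp_inj p (e := Prod.map e1 e3) (he1.prodMap he3) _ _
      (fun ω => by simp [hf ω, hh ω, Prod.map])
  have E2 : entOf p (fun ω => (g' ω, h' ω)) = entOf p (fun ω => (g ω, h ω)) :=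
    entOf_comp_inj p (e := Prod.map e2 e3) (he2.prodMap he3) _ _
      (fun ω => by simp [hg ω, hh ω, Prod.map])
  have E3 : entOf p (fun ω => (f' ω, g' ω, h' ω)) = entOf p (fun ω => (f ω, g ω, h ω)) :=
    entOf_comp_inj p (e := Prod.map e1 (Prod.map e2 e3)) (he1.prodMap (he2.prodMap he3)) _ _
      (fun ω => by simp [hf ω, hg ω, hh ω, Prod.map])
  have E4 : entOf p h' = entOf p h := entOf_comp_inj p he3 _ _ hh
  rw [E1, E2, E3, E4]

lemma condMutInfo_symm (f : Ω → β) (g : Ω → γ) (h : Ω → δ) :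
    condMutInfo p f g h = condMutInfo p g f h := by
  unfold condMutInfo
  have e1 : entOf p (fun ω => (g ω, f ω, h ω)) = entOf p (fun ω => (f ω, g ω, h ω)) := by
    refine entOf_comp_inj p (e := fun x : β × γ × δ => (x.2.1, x.1, x.2.2)) ?_ _ _ (fun ω => rfl)
    intro x y hxy
    simp only [Prod.mk.injEq] at hxy
    exact Prod.ext hxy.2.1 (Prod.ext hxy.1 hxy.2.2)
  rw [e1]
  ring

lemma condMutInfo_chain (f1 : Ω → β) (f2 : Ω → γ) (g : Ω → ε) (h : Ω → δ) :
    condMutInfo p (fun ω => (f1 ω, f2 ω)) g h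
      = condMutInfo p f1 g h + condMutInfo p f2 g (fun ω => (f1 ω, h ω)) := by
  unfold condMutInfo
  have e1 : entOf p (fun ω => (f2 ω, (f1 ω, h ω))) = entOf p (fun ω => ((f1 ω, f2 ω), h ω)) := by
    refine entOf_comp_inj p (e := fun x : (β × γ) × δ => (x.1.2, (x.1.1, x.2))) ?_ _ _
      (fun ω => rfl)
    intro x y hxy
    simp only [Prod.mk.injEq] at hxy
    exact Prod.ext (Prod.ext hxy.2.1 hxy.1) hxy.2.2
  have e2 : entOf p (fun ω => (g ω, (f1 ω, h ω))) = entOf p (fun ω => (f1 ω, g ω, h ω)) := by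
    refine entOf_comp_inj p (e := fun x : β × ε × δ => (x.2.1, (x.1, x.2.2))) ?_ _ _
      (fun ω => rfl)
    intro x y hxy
    simp only [Prod.mk.injEq] at hxy
    exact Prod.ext hxy.2.1 (Prod.ext hxy.1 hxy.2.2)
  have e3 : entOf p (fun ω => (f2 ω, g ω, (f1 ω, h ω)))
      = entOf p (fun ω => ((f1 ω, f2 ω), g ω, h ω)) := by
    refine entOf_comp_inj p
      (e := fun x : (β × γ) × ε × δ => (x.1.2, x.2.1, (x.1.1, x.2.2))) ?_ _ _ (fun ω => rfl)
    intro x y hxy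
    simp only [Prod.mk.injEq] at hxy
    exact Prod.ext (Prod.ext hxy.2.2.1 hxy.1) (Prod.ext hxy.2.1 hxy.2.2.2)
  rw [e1, e2, e3]
  ring

end General4

section General5
variable {Ω β γ δ : Type*} [Fintype Ω] [Fintype β] [Fintype γ] [Fintype δ]
  [DecidableEq β] [DecidableEq γ] [DecidableEq δ]
variable (p : Ω → ℝ)

lemma distOf_mid_marg (u : Ω → β) (v : Ω → γ) (w : Ω → δ) (b : β) (d : δ) :
    distOf p (fun ω => (u ω, w ω)) (b, d)
      = ∑ c, distOf p (fun ω => (u ω, v ω, w ω)) (b, c, d) := by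
  unfold distOf
  rw [Finset.sum_comm]
  refine Finset.sum_congr rfl fun ω _ => ?_
  simp only [Prod.mk.injEq]
  rw [Finset.sum_eq_single (v ω)] <;> simp +contextual [eq_comm, and_assoc]

lemma condMutInfo_nonneg (hp : IsPMF p) (f : Ω → β) (g : Ω → γ) (h : Ω → δ) :
    0 ≤ condMutInfo p f g h := by
  classical
  set r : β × γ × δ → ℝ := distOf p (fun ω => (f ω, g ω, h ω)) with hr_def
  set m1 : β × δ → ℝ := distOf p (fun ω => (f ω, h ω)) with hm1_def
  set m2 : γ × δ → ℝ := distOf p (fun ω => (g ω, h ω)) with hm2_def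
  set m3 : δ → ℝ := distOf p h with hm3_def
  have hr : ∀ x, 0 ≤ r x := fun x => distOf_nonneg p hp.1 _ x
  have hm1 : ∀ x, 0 ≤ m1 x := fun x => distOf_nonneg p hp.1 _ x
  have hm2 : ∀ x, 0 ≤ m2 x := fun x => distOf_nonneg p hp.1 _ x
  have hm3 : ∀ x, 0 ≤ m3 x := fun x => distOf_nonneg p hp.1 _ x
  have h1 : ∀ b d, m1 (b, d) = ∑ c, r (b, c, d) := fun b d => distOf_mid_marg p f g h b d
  have h2 : ∀ c d, m2 (c, d) = ∑ b, r (b, c, d) := fun c d =>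
    distOf_snd_marg p f (fun ω => (g ω, h ω)) (c, d)
  have h3 : ∀ d, m3 d = ∑ b, ∑ c, r (b, c, d) := by
    intro d
    rw [show m3 d = ∑ c, m2 (c, d) from distOf_snd_marg p g h d]
    simp only [h2]
    exact Finset.sum_comm
  have hm1sum : ∀ d, ∑ b, m1 (b, d) = m3 d := by
    intro d; rw [h3 d]; exact Finset.sum_congr rfl fun b _ => h1 b d
  have hm2sum : ∀ d, ∑ c, m2 (c, d) = m3 d := by
    intro d
    rw [h3 d, Finset.sum_comm]
    exact Finset.sum_congr rfl fun c _ => h2 c d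
  have hrsum : ∑ x : β × γ × δ, r x = 1 := by rw [hr_def, sum_distOf, hp.2]
  have hm3sum : ∑ d, m3 d = 1 := by rw [hm3_def, sum_distOf, hp.2]
  -- domination of marginals
  have dom1 : ∀ x : β × γ × δ, r x ≤ m1 (x.1, x.2.2) := by
    rintro ⟨b, c, d⟩
    rw [h1]
    exact Finset.single_le_sum (fun c _ => hr (b, c, d)) (Finset.mem_univ c)
  have dom2 : ∀ x : β × γ × δ, r x ≤ m2 x.2 := by
    rintro ⟨b, c, d⟩
    rw [h2]
    exact Finset.single_le_sum (fun b _ => hr (b, c, d)) (Finset.mem_univ b)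
  have dom3 : ∀ x : β × γ × δ, r x ≤ m3 x.2.2 := by
    rintro ⟨b, c, d⟩
    rw [h3]
    calc r (b, c, d) ≤ ∑ c, r (b, c, d) :=
          Finset.single_le_sum (fun c _ => hr (b, c, d)) (Finset.mem_univ c)
      _ ≤ ∑ b, ∑ c, r (b, c, d) :=
          Finset.single_le_sum (fun b _ => Finset.sum_nonneg fun c _ => hr (b, c, d))
            (Finset.mem_univ b)
  -- expansion of CMI as a single sum
  have E1 : ∑ x : β × δ, m1 x * Real.logb 2 (m1 x)
      = ∑ x : β × γ × δ, r x * Real.logb 2 (m1 (x.1, x.2.2)) := by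
    simp only [Fintype.sum_prod_type]
    refine Finset.sum_congr rfl fun b _ => ?_
    conv_rhs => rw [Finset.sum_comm]
    refine Finset.sum_congr rfl fun d _ => ?_
    rw [h1 b d, Finset.sum_mul]
  have E2 : ∑ x : γ × δ, m2 x * Real.logb 2 (m2 x)
      = ∑ x : β × γ × δ, r x * Real.logb 2 (m2 x.2) := by
    simp only [Fintype.sum_prod_type]
    conv_rhs => rw [Finset.sum_comm]
    refine Finset.sum_congr rfl fun c _ => ?_
    conv_rhs => rw [Finset.sum_comm]
    refine Finset.sum_congr rfl fun d _ => ?_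
    rw [h2 c d, Finset.sum_mul]
  have E3 : ∑ d, m3 d * Real.logb 2 (m3 d)
      = ∑ x : β × γ × δ, r x * Real.logb 2 (m3 x.2.2) := by
    simp only [Fintype.sum_prod_type]
    calc ∑ d, m3 d * Real.logb 2 (m3 d)
        = ∑ d, ∑ c, m2 (c, d) * Real.logb 2 (m3 d) := by
          refine Finset.sum_congr rfl fun d _ => ?_
          rw [← Finset.sum_mul, hm2sum d]
      _ = ∑ c, ∑ d, m2 (c, d) * Real.logb 2 (m3 d) := Finset.sum_comm
      _ = ∑ c, ∑ d, ∑ b, r (b, c, d) * Real.logb 2 (m3 d) := by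
          refine Finset.sum_congr rfl fun c _ => Finset.sum_congr rfl fun d _ => ?_
          rw [h2 c d, Finset.sum_mul]
      _ = ∑ c, ∑ b, ∑ d, r (b, c, d) * Real.logb 2 (m3 d) :=
          Finset.sum_congr rfl fun c _ => Finset.sum_comm
      _ = ∑ b, ∑ c, ∑ d, r (b, c, d) * Real.logb 2 (m3 d) := Finset.sum_comm
  have main : condMutInfo p f g h = ∑ x : β × γ × δ,
      r x * (Real.logb 2 (r x) + Real.logb 2 (m3 x.2.2)
        - Real.logb 2 (m1 (x.1, x.2.2)) - Real.logb 2 (m2 x.2)) := by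
    unfold condMutInfo entOf ent
    rw [← hm1_def, ← hm2_def, ← hm3_def, ← hr_def]
    rw [E1, E2, E3]
    simp only [mul_add, mul_sub, Finset.sum_add_distrib, Finset.sum_sub_distrib]
    ring
  rw [main]
  have hL : 0 < Real.log 2 := Real.log_pos one_lt_two
  have main2 : ∑ x : β × γ × δ, r x * (Real.logb 2 (r x) + Real.logb 2 (m3 x.2.2)
        - Real.logb 2 (m1 (x.1, x.2.2)) - Real.logb 2 (m2 x.2))
      = (∑ x : β × γ × δ, r x * (Real.log (r x) + Real.log (m3 x.2.2)
        - Real.log (m1 (x.1, x.2.2)) - Real.log (m2 x.2))) / Real.log 2 := by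
    rw [Finset.sum_div]
    refine Finset.sum_congr rfl fun x _ => ?_
    simp only [Real.logb]
    ring
  rw [main2]
  apply div_nonneg _ hL.le
  have bound : ∀ x : β × γ × δ,
      r x * (Real.log (m1 (x.1, x.2.2)) + Real.log (m2 x.2) - Real.log (r x)
        - Real.log (m3 x.2.2))
      ≤ (if 0 < r x then m1 (x.1, x.2.2) * m2 x.2 / m3 x.2.2 else 0) - r x := by
    intro x
    rcases (hr x).lt_or_eq with hx | hx
    · have hm1x : 0 < m1 (x.1, x.2.2) := lt_of_lt_of_le hx (dom1 x)
      have hm2x : 0 < m2 x.2 := lt_of_lt_of_le hx (dom2 x)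
      have hm3x : 0 < m3 x.2.2 := lt_of_lt_of_le hx (dom3 x)
      rw [if_pos hx]
      have hlogeq : Real.log (m1 (x.1, x.2.2)) + Real.log (m2 x.2) - Real.log (r x)
          - Real.log (m3 x.2.2)
          = Real.log (m1 (x.1, x.2.2) * m2 x.2 / (r x * m3 x.2.2)) := by
        rw [Real.log_div (by positivity) (by positivity), Real.log_mul hm1x.ne' hm2x.ne',
          Real.log_mul hx.ne' hm3x.ne']
        ring
      rw [hlogeq]
      have hlb := Real.log_le_sub_one_of_pos
        (show (0:ℝ) < m1 (x.1, x.2.2) * m2 x.2 / (r x * m3 x.2.2) by positivity)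
      calc r x * Real.log (m1 (x.1, x.2.2) * m2 x.2 / (r x * m3 x.2.2))
          ≤ r x * (m1 (x.1, x.2.2) * m2 x.2 / (r x * m3 x.2.2) - 1) :=
            mul_le_mul_of_nonneg_left hlb hx.le
        _ = m1 (x.1, x.2.2) * m2 x.2 / m3 x.2.2 - r x := by
            field_simp
    · rw [← hx]
      simp
  have keyineq : ∑ x : β × γ × δ, r x * (Real.log (m1 (x.1, x.2.2)) + Real.log (m2 x.2)
      - Real.log (r x) - Real.log (m3 x.2.2)) ≤ 0 := by
    have hsum1 : (∑ x : β × γ × δ,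
        if 0 < r x then m1 (x.1, x.2.2) * m2 x.2 / m3 x.2.2 else 0) ≤ 1 := by
      calc (∑ x : β × γ × δ, if 0 < r x then m1 (x.1, x.2.2) * m2 x.2 / m3 x.2.2 else 0)
          ≤ ∑ x : β × γ × δ,
            if 0 < m3 x.2.2 then m1 (x.1, x.2.2) * m2 x.2 / m3 x.2.2 else 0 := by
            refine Finset.sum_le_sum fun x _ => ?_
            by_cases hx : 0 < r x
            · rw [if_pos hx, if_pos (lt_of_lt_of_le hx (dom3 x))]
            · rw [if_neg hx]
              split_ifs with h3x
              · exact div_nonneg (mul_nonneg (hm1 _) (hm2 _)) (hm3 _)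
              · exact le_refl 0
        _ = ∑ d, if 0 < m3 d then m3 d else 0 := by
            simp only [Fintype.sum_prod_type]
            calc ∑ b, ∑ c, ∑ d, (if 0 < m3 d then m1 (b, d) * m2 (c, d) / m3 d else 0)
                = ∑ b, ∑ d, ∑ c, (if 0 < m3 d then m1 (b, d) * m2 (c, d) / m3 d else 0) :=
                  Finset.sum_congr rfl fun b _ => Finset.sum_comm
              _ = ∑ d, ∑ b, ∑ c, (if 0 < m3 d then m1 (b, d) * m2 (c, d) / m3 d else 0) :=
                  Finset.sum_comm
              _ = ∑ d, if 0 < m3 d then m3 d else 0 := by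
                  refine Finset.sum_congr rfl fun d _ => ?_
                  by_cases hd : 0 < m3 d
                  · simp only [if_pos hd]
                    calc ∑ b, ∑ c, m1 (b, d) * m2 (c, d) / m3 d
                        = (∑ b, m1 (b, d)) * (∑ c, m2 (c, d)) / m3 d := by
                          rw [Finset.sum_mul_sum, Finset.sum_div]
                          exact Finset.sum_congr rfl fun b _ => by rw [Finset.sum_div]
                      _ = m3 d * m3 d / m3 d := by rw [hm1sum d, hm2sum d]
                      _ = m3 d := by field_simp
                  · simp only [if_neg hd]
                    exact Finset.sum_eq_zero fun b _ => Finset.sum_eq_zero fun c _ => rfl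
        _ ≤ ∑ d, m3 d := by
            refine Finset.sum_le_sum fun d _ => ?_
            split_ifs
            · exact le_refl _
            · exact hm3 d
        _ = 1 := hm3sum
    calc ∑ x : β × γ × δ, r x * (Real.log (m1 (x.1, x.2.2)) + Real.log (m2 x.2)
          - Real.log (r x) - Real.log (m3 x.2.2))
        ≤ ∑ x : β × γ × δ,
          ((if 0 < r x then m1 (x.1, x.2.2) * m2 x.2 / m3 x.2.2 else 0) - r x) :=
          Finset.sum_le_sum fun x _ => bound x
      _ = (∑ x : β × γ × δ,
            if 0 < r x then m1 (x.1, x.2.2) * m2 x.2 / m3 x.2.2 else 0) - 1 := by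
          rw [Finset.sum_sub_distrib, hrsum]
      _ ≤ 0 := by linarith
  have flip : ∑ x : β × γ × δ, r x * (Real.log (r x) + Real.log (m3 x.2.2)
      - Real.log (m1 (x.1, x.2.2)) - Real.log (m2 x.2))
      = -∑ x : β × γ × δ, r x * (Real.log (m1 (x.1, x.2.2)) + Real.log (m2 x.2)
      - Real.log (r x) - Real.log (m3 x.2.2)) := by
    rw [← Finset.sum_neg_distrib]
    exact Finset.sum_congr rfl fun x _ => by ring
  rw [flip]
  linarith

end General5

section General6
variable {Ω β γ δ ε : Type*} [Fintype Ω] [Fintype β] [Fintype γ] [Fintype δ] [Fintype ε]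
  [DecidableEq β] [DecidableEq γ] [DecidableEq δ] [DecidableEq ε]
variable (p : Ω → ℝ)

/-- If `I(f; b | h) = 0` then conditioning on `b` can only increase `I(f; y | h)`. -/
lemma condMutInfo_mono (hp : IsPMF p) (f : Ω → β) (y : Ω → γ) (b : Ω → ε) (h : Ω → δ)
    (hzero : condMutInfo p f b h = 0) :
    condMutInfo p f y h ≤ condMutInfo p f y (fun ω => (b ω, h ω)) := by
  have c1 : condMutInfo p f (fun ω => (b ω, y ω)) h
      = condMutInfo p f b h + condMutInfo p f y (fun ω => (b ω, h ω)) := by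
    rw [condMutInfo_symm p f (fun ω => (b ω, y ω)) h, condMutInfo_chain p b y f h,
      condMutInfo_symm p b f h, condMutInfo_symm p y f (fun ω => (b ω, h ω))]
  have c2 : condMutInfo p f (fun ω => (y ω, b ω)) h
      = condMutInfo p f y h + condMutInfo p f b (fun ω => (y ω, h ω)) := by
    rw [condMutInfo_symm p f (fun ω => (y ω, b ω)) h, condMutInfo_chain p y b f h,
      condMutInfo_symm p y f h, condMutInfo_symm p b f (fun ω => (y ω, h ω))]
  have c3 : condMutInfo p f (fun ω => (b ω, y ω)) h
      = condMutInfo p f (fun ω => (y ω, b ω)) h :=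
    condMutInfo_congr p f (fun ω => (y ω, b ω)) h f (fun ω => (b ω, y ω)) h
      (e1 := id) (e2 := Prod.swap) (e3 := id) Function.injective_id Prod.swap_injective
      Function.injective_id (fun ω => rfl) (fun ω => rfl) (fun ω => rfl)
  have n1 : 0 ≤ condMutInfo p f b (fun ω => (y ω, h ω)) := condMutInfo_nonneg p hp f b _
  linarith

end General6


/-- The number `2^{nR}` of messages at blocklength `n` and rate `R` (in bits). -/
def msgSize (n : ℕ) (R : ℝ) : ℕ := max 1 ⌊(2 : ℝ) ^ ((n : ℝ) * R)⌋₊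

instance (n : ℕ) (R : ℝ) : NeZero (msgSize n R) :=
  ⟨by have h : 1 ≤ msgSize n R := le_max_left _ _; omega⟩

/-- The `ε`-typical set: `xs` is `ε`-typical for the pmf `p` if the empirical frequency of
every symbol `a` is within `ε · p a` of `p a`. -/
def Typical {α : Type*} [Fintype α] [DecidableEq α] (p : α → ℝ) (ε : ℝ) {n : ℕ}
    (xs : Fin n → α) : Prop :=
  ∀ a, |((Finset.univ.filter fun i => xs i = a).card : ℝ) / (n : ℝ) - p a| ≤ ε * p a

section HanKobayashi

variable {Qt U11 U12 U21 U22 X1 X2 Y1 Y2 : Type*}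
  [Fintype Qt] [DecidableEq Qt] [Fintype U11] [DecidableEq U11] [Fintype U12] [DecidableEq U12]
  [Fintype U21] [DecidableEq U21] [Fintype U22] [DecidableEq U22]
  [Fintype X1] [DecidableEq X1] [Fintype X2] [DecidableEq X2]
  [Fintype Y1] [DecidableEq Y1] [Fintype Y2] [DecidableEq Y2]

variable (W : X1 → X2 → Y1 × Y2 → ℝ)
variable (pq : Qt → ℝ) (p11 : Qt → U11 → ℝ) (p12 : Qt → U12 → ℝ)
  (p21 : Qt → U21 → ℝ) (p22 : Qt → U22 → ℝ)
  (g1 : U11 → U12 → X1) (g2 : U21 → U22 → X2)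

/-- The single-letter joint distribution of `(Q, U11, U12, U21, U22, Y1, Y2)` for
Han–Kobayashi coding: the auxiliaries are conditionally independent given `Q`, the inputs
are `X1 = x1(U11, U12)` and `X2 = x2(U21, U22)`, and the outputs come from the channel. -/
def hkJointP : Qt × U11 × U12 × U21 × U22 × Y1 × Y2 → ℝ := fun z =>
  pq z.1 * p11 z.1 z.2.1 * p12 z.1 z.2.2.1 * p21 z.1 z.2.2.2.1 * p22 z.1 z.2.2.2.2.1 *
    W (g1 z.2.1 z.2.2.1) (g2 z.2.2.2.1 z.2.2.2.2.1) (z.2.2.2.2.2.1, z.2.2.2.2.2.2)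

def hQ : Qt × U11 × U12 × U21 × U22 × Y1 × Y2 → Qt := fun z => z.1
def hU11 : Qt × U11 × U12 × U21 × U22 × Y1 × Y2 → U11 := fun z => z.2.1
def hU12 : Qt × U11 × U12 × U21 × U22 × Y1 × Y2 → U12 := fun z => z.2.2.1
def hU21 : Qt × U11 × U12 × U21 × U22 × Y1 × Y2 → U21 := fun z => z.2.2.2.1
def hU22 : Qt × U11 × U12 × U21 × U22 × Y1 × Y2 → U22 := fun z => z.2.2.2.2.1
def hY1 : Qt × U11 × U12 × U21 × U22 × Y1 × Y2 → Y1 := fun z => z.2.2.2.2.2.1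
def hY2 : Qt × U11 × U12 × U21 × U22 × Y1 × Y2 → Y2 := fun z => z.2.2.2.2.2.2

/-- conditional law of `Y1` given `(X1, Q)` -/
def kY1 (x1 : X1) (q : Qt) (y1 : Y1) : ℝ :=
  ∑ u21, ∑ u22, p21 q u21 * p22 q u22 * ∑ y2, W x1 (g2 u21 u22) (y1, y2)

/-- conditional law of `Y2` given `(U12, X2, Q)` -/
def kY2 (u12 : U12) (x2 : X2) (q : Qt) (y2 : Y2) : ℝ :=
  ∑ u11, p11 q u11 * ∑ y1, W (g1 u11 u12) x2 (y1, y2)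

/-- conditional law of `Y2` given `(X2, Q)` -/
def kY2' (x2 : X2) (q : Qt) (y2 : Y2) : ℝ :=
  ∑ u12, p12 q u12 * kY2 W p11 g1 u12 x2 q y2

lemma hWsum (hW : ∀ x1 x2, IsPMF (W x1 x2)) (x1 : X1) (x2 : X2) :
    ∑ y1 : Y1, ∑ y2 : Y2, W x1 x2 (y1, y2) = 1 := by
  rw [← Fintype.sum_prod_type]
  exact (hW x1 x2).2

lemma kY1sum (hp21 : ∀ q, IsPMF (p21 q)) (hp22 : ∀ q, IsPMF (p22 q))
    (hW : ∀ x1 x2, IsPMF (W x1 x2)) (x1 : X1) (q : Qt) :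
    ∑ y1, kY1 W p21 p22 g2 x1 q y1 = 1 := by
  unfold kY1
  calc ∑ y1, ∑ u21, ∑ u22, p21 q u21 * p22 q u22 * ∑ y2, W x1 (g2 u21 u22) (y1, y2)
      = ∑ u21, ∑ y1, ∑ u22, p21 q u21 * p22 q u22 * ∑ y2, W x1 (g2 u21 u22) (y1, y2) :=
        Finset.sum_comm
    _ = ∑ u21, ∑ u22, ∑ y1, p21 q u21 * p22 q u22 * ∑ y2, W x1 (g2 u21 u22) (y1, y2) :=
        Finset.sum_congr rfl fun u21 _ => Finset.sum_comm
    _ = ∑ u21, ∑ u22, p21 q u21 * p22 q u22 * ∑ y1, ∑ y2, W x1 (g2 u21 u22) (y1, y2) := by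
        refine Finset.sum_congr rfl fun u21 _ => Finset.sum_congr rfl fun u22 _ => ?_
        rw [Finset.mul_sum]
    _ = ∑ u21, ∑ u22, p21 q u21 * p22 q u22 := by
        refine Finset.sum_congr rfl fun u21 _ => Finset.sum_congr rfl fun u22 _ => ?_
        rw [hWsum W hW, mul_one]
    _ = 1 := by
        rw [← Finset.sum_mul_sum, (hp21 q).2, (hp22 q).2, mul_one]

lemma kY2sum (hp11 : ∀ q, IsPMF (p11 q))
    (hW : ∀ x1 x2, IsPMF (W x1 x2)) (u12 : U12) (x2 : X2) (q : Qt) :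
    ∑ y2, kY2 W p11 g1 u12 x2 q y2 = 1 := by
  unfold kY2
  calc ∑ y2, ∑ u11, p11 q u11 * ∑ y1, W (g1 u11 u12) x2 (y1, y2)
      = ∑ u11, ∑ y2, p11 q u11 * ∑ y1, W (g1 u11 u12) x2 (y1, y2) := Finset.sum_comm
    _ = ∑ u11, p11 q u11 * ∑ y2, ∑ y1, W (g1 u11 u12) x2 (y1, y2) := by
        refine Finset.sum_congr rfl fun u11 _ => ?_
        rw [Finset.mul_sum]
    _ = ∑ u11, p11 q u11 := by
        refine Finset.sum_congr rfl fun u11 _ => ?_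
        rw [Finset.sum_comm, hWsum W hW, mul_one]
    _ = 1 := (hp11 q).2

/-- M1 -/
lemma distM1 (q : Qt) (u11 : U11) (u12 : U12) (y1 : Y1) :
    distOf (hkJointP W pq p11 p12 p21 p22 g1 g2)
      (fun z => ((hQ z, hU11 z, hU12 z), hY1 z)) ((q, u11, u12), y1)
    = (pq q * p11 q u11 * p12 q u12) * kY1 W p21 p22 g2 (g1 u11 u12) q y1 := by
  unfold distOf hkJointP hQ hU11 hU12 hY1 kY1
  simp only [Fintype.sum_prod_type, Prod.mk.injEq, ite_and, Finset.sum_ite_irrel,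
    Finset.sum_const_zero, Finset.sum_ite_eq', Finset.mem_univ, if_true]
  simp only [Finset.mul_sum]
  exact Finset.sum_congr rfl fun a _ => Finset.sum_congr rfl fun b _ =>
    Finset.sum_congr rfl fun c _ => by ring

/-- M3 -/
lemma distM3 (q : Qt) (u12 : U12) (u21 : U21) (u22 : U22) (y2 : Y2) :
    distOf (hkJointP W pq p11 p12 p21 p22 g1 g2)
      (fun z => ((hQ z, hU12 z, hU21 z, hU22 z), hY2 z)) ((q, u12, u21, u22), y2)
    = (pq q * p12 q u12 * p21 q u21 * p22 q u22)
        * kY2 W p11 g1 u12 (g2 u21 u22) q y2 := by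
  unfold distOf hkJointP hQ hU12 hU21 hU22 hY2 kY2
  simp only [Fintype.sum_prod_type, Prod.mk.injEq, ite_and, Finset.sum_ite_irrel,
    Finset.sum_const_zero, Finset.sum_ite_eq', Finset.mem_univ, if_true]
  simp only [Finset.mul_sum]
  exact Finset.sum_congr rfl fun a _ => Finset.sum_congr rfl fun b _ => by ring

/-- M2 -/
lemma distM2 (hp21 : ∀ q, IsPMF (p21 q)) (hp22 : ∀ q, IsPMF (p22 q))
    (hW : ∀ x1 x2, IsPMF (W x1 x2)) (q : Qt) (u11 : U11) (u12 : U12) :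
    distOf (hkJointP W pq p11 p12 p21 p22 g1 g2)
      (fun z => (hQ z, hU11 z, hU12 z)) (q, u11, u12)
    = pq q * p11 q u11 * p12 q u12 := by
  rw [distOf_fst_marg _ (fun z => (hQ z, hU11 z, hU12 z)) hY1 (q, u11, u12)]
  simp only [distM1 W pq p11 p12 p21 p22 g1 g2 q u11 u12]
  rw [← Finset.mul_sum, kY1sum W p21 p22 g2 hp21 hp22 hW, mul_one]

/-- M4 -/
lemma distM4 (hp11 : ∀ q, IsPMF (p11 q)) (hW : ∀ x1 x2, IsPMF (W x1 x2))
    (q : Qt) (u12 : U12) (u21 : U21) (u22 : U22) :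
    distOf (hkJointP W pq p11 p12 p21 p22 g1 g2)
      (fun z => (hQ z, hU12 z, hU21 z, hU22 z)) (q, u12, u21, u22)
    = pq q * p12 q u12 * p21 q u21 * p22 q u22 := by
  rw [distOf_fst_marg _ (fun z => (hQ z, hU12 z, hU21 z, hU22 z)) hY2 (q, u12, u21, u22)]
  simp only [distM3 W pq p11 p12 p21 p22 g1 g2 q u12 u21 u22]
  rw [← Finset.mul_sum, kY2sum W p11 g1 hp11 hW, mul_one]

/-- M5 -/
lemma distM5 (q : Qt) (u21 : U21) (u22 : U22) (y2 : Y2) :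
    distOf (hkJointP W pq p11 p12 p21 p22 g1 g2)
      (fun z => ((hQ z, hU21 z, hU22 z), hY2 z)) ((q, u21, u22), y2)
    = (pq q * p21 q u21 * p22 q u22) * kY2' W p11 p12 g1 (g2 u21 u22) q y2 := by
  have retup : ∀ (x : (Qt × U12 × U21 × U22) × Y2),
      distOf (hkJointP W pq p11 p12 p21 p22 g1 g2)
        (fun z => ((hQ z, hU21 z, hU22 z), hU12 z, hY2 z))
        ((x.1.1, x.1.2.2.1, x.1.2.2.2), x.1.2.1, x.2)
      = distOf (hkJointP W pq p11 p12 p21 p22 g1 g2)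
        (fun z => ((hQ z, hU12 z, hU21 z, hU22 z), hY2 z)) x := by
    rintro ⟨⟨qv, u12v, u21v, u22v⟩, y2v⟩
    have he : Function.Injective (fun x : (Qt × U12 × U21 × U22) × Y2 =>
        ((x.1.1, x.1.2.2.1, x.1.2.2.2), x.1.2.1, x.2)) :=
      Function.LeftInverse.injective
        (g := fun x : (Qt × U21 × U22) × U12 × Y2 =>
          ((x.1.1, x.2.1, x.1.2.1, x.1.2.2), x.2.2))
        (by rintro ⟨⟨a, b, c, d⟩, e⟩; rfl)
    exact distOf_comp_inj (hkJointP W pq p11 p12 p21 p22 g1 g2) he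
      (fun z => ((hQ z, hU21 z, hU22 z), hU12 z, hY2 z))
      (fun z => ((hQ z, hU12 z, hU21 z, hU22 z), hY2 z))
      (fun ω => rfl) ((qv, u12v, u21v, u22v), y2v)
  rw [distOf_mid_marg _ (fun z => (hQ z, hU21 z, hU22 z)) hU12 hY2 (q, u21, u22) y2]
  unfold kY2'
  rw [Finset.mul_sum]
  refine Finset.sum_congr rfl fun u12 _ => ?_
  rw [retup ((q, u12, u21, u22), y2), distM3]
  ring

/-- M6 -/
lemma distM6 (hp11 : ∀ q, IsPMF (p11 q)) (hp12 : ∀ q, IsPMF (p12 q))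
    (hW : ∀ x1 x2, IsPMF (W x1 x2)) (q : Qt) (u21 : U21) (u22 : U22) :
    distOf (hkJointP W pq p11 p12 p21 p22 g1 g2)
      (fun z => (hQ z, hU21 z, hU22 z)) (q, u21, u22)
    = pq q * p21 q u21 * p22 q u22 := by
  rw [distOf_mid_marg _ hQ hU12 (fun z => (hU21 z, hU22 z)) q (u21, u22)]
  simp only [distM4 W pq p11 p12 p21 p22 g1 g2 hp11 hW q]
  have : ∀ u12 : U12, pq q * p12 q u12 * p21 q u21 * p22 q u22
      = p12 q u12 * (pq q * p21 q u21 * p22 q u22) := fun _ => by ring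
  simp only [this]
  rw [← Finset.sum_mul, (hp12 q).2, one_mul]

/-- M9 -/
lemma distM9 (hp11 : ∀ q, IsPMF (p11 q)) (hp22 : ∀ q, IsPMF (p22 q))
    (hW : ∀ x1 x2, IsPMF (W x1 x2)) (q : Qt) (u12 : U12) (u21 : U21) :
    distOf (hkJointP W pq p11 p12 p21 p22 g1 g2)
      (fun z => (hQ z, hU12 z, hU21 z)) (q, u12, u21)
    = pq q * p12 q u12 * p21 q u21 := by
  have retup : ∀ (x : Qt × U12 × U21 × U22),
      distOf (hkJointP W pq p11 p12 p21 p22 g1 g2)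
        (fun z => ((hQ z, hU12 z, hU21 z), hU22 z)) ((x.1, x.2.1, x.2.2.1), x.2.2.2)
      = distOf (hkJointP W pq p11 p12 p21 p22 g1 g2)
        (fun z => (hQ z, hU12 z, hU21 z, hU22 z)) x := by
    rintro ⟨qv, u12v, u21v, u22v⟩
    have he : Function.Injective
        (fun x : Qt × U12 × U21 × U22 => ((x.1, x.2.1, x.2.2.1), x.2.2.2)) :=
      Function.LeftInverse.injective
        (g := fun x : (Qt × U12 × U21) × U22 => (x.1.1, x.1.2.1, x.1.2.2, x.2))
        (by rintro ⟨a, b, c, d⟩; rfl)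
    exact distOf_comp_inj (hkJointP W pq p11 p12 p21 p22 g1 g2) he
      (fun z => ((hQ z, hU12 z, hU21 z), hU22 z))
      (fun z => (hQ z, hU12 z, hU21 z, hU22 z))
      (fun ω => rfl) (qv, u12v, u21v, u22v)
  rw [distOf_fst_marg _ (fun z => (hQ z, hU12 z, hU21 z)) hU22 (q, u12, u21)]
  have : ∀ u22 : U22,
      distOf (hkJointP W pq p11 p12 p21 p22 g1 g2)
        (fun z => ((hQ z, hU12 z, hU21 z), hU22 z)) ((q, u12, u21), u22)
      = p22 q u22 * (pq q * p12 q u12 * p21 q u21) := by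
    intro u22
    rw [retup (q, u12, u21, u22), distM4 W pq p11 p12 p21 p22 g1 g2 hp11 hW]
    ring
  simp only [this]
  rw [← Finset.sum_mul, (hp22 q).2, one_mul]

/-- M10 -/
lemma distM10 (hp11 : ∀ q, IsPMF (p11 q)) (hp12 : ∀ q, IsPMF (p12 q))
    (hp22 : ∀ q, IsPMF (p22 q)) (hW : ∀ x1 x2, IsPMF (W x1 x2)) (q : Qt) (u21 : U21) :
    distOf (hkJointP W pq p11 p12 p21 p22 g1 g2) (fun z => (hQ z, hU21 z)) (q, u21)
    = pq q * p21 q u21 := by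
  rw [distOf_fst_marg _ (fun z => (hQ z, hU21 z)) hU22 (q, u21)]
  have retup : ∀ (x : Qt × U21 × U22),
      distOf (hkJointP W pq p11 p12 p21 p22 g1 g2)
        (fun z => ((hQ z, hU21 z), hU22 z)) ((x.1, x.2.1), x.2.2)
      = distOf (hkJointP W pq p11 p12 p21 p22 g1 g2)
        (fun z => (hQ z, hU21 z, hU22 z)) x := by
    rintro ⟨qv, u21v, u22v⟩
    have he : Function.Injective (fun x : Qt × U21 × U22 => ((x.1, x.2.1), x.2.2)) :=
      Function.LeftInverse.injective
        (g := fun x : (Qt × U21) × U22 => (x.1.1, x.1.2, x.2))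
        (by rintro ⟨a, b, c⟩; rfl)
    exact distOf_comp_inj (hkJointP W pq p11 p12 p21 p22 g1 g2) he
      (fun z => ((hQ z, hU21 z), hU22 z))
      (fun z => (hQ z, hU21 z, hU22 z))
      (fun ω => rfl) (qv, u21v, u22v)
  have : ∀ u22 : U22,
      distOf (hkJointP W pq p11 p12 p21 p22 g1 g2)
        (fun z => ((hQ z, hU21 z), hU22 z)) ((q, u21), u22)
      = p22 q u22 * (pq q * p21 q u21) := by
    intro u22
    rw [retup (q, u21, u22), distM6 W pq p11 p12 p21 p22 g1 g2 hp11 hp12 hW]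
    ring
  simp only [this]
  rw [← Finset.sum_mul, (hp22 q).2, one_mul]

/-- M11 -/
lemma distM11 (hp11 : ∀ q, IsPMF (p11 q)) (hp12 : ∀ q, IsPMF (p12 q))
    (hp21 : ∀ q, IsPMF (p21 q)) (hW : ∀ x1 x2, IsPMF (W x1 x2)) (q : Qt) (u22 : U22) :
    distOf (hkJointP W pq p11 p12 p21 p22 g1 g2) (fun z => (hQ z, hU22 z)) (q, u22)
    = pq q * p22 q u22 := by
  rw [distOf_mid_marg _ hQ hU21 hU22 q u22]
  have : ∀ u21 : U21,
      distOf (hkJointP W pq p11 p12 p21 p22 g1 g2)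
        (fun z => (hQ z, hU21 z, hU22 z)) (q, u21, u22)
      = p21 q u21 * (pq q * p22 q u22) := by
    intro u21
    rw [distM6 W pq p11 p12 p21 p22 g1 g2 hp11 hp12 hW]
    ring
  simp only [this]
  rw [← Finset.sum_mul, (hp21 q).2, one_mul]

/-- M12 -/
lemma distM12 (hp12 : ∀ q, IsPMF (p12 q)) (hp21 : ∀ q, IsPMF (p21 q))
    (hp22 : ∀ q, IsPMF (p22 q)) (hW : ∀ x1 x2, IsPMF (W x1 x2)) (q : Qt) (u11 : U11) :
    distOf (hkJointP W pq p11 p12 p21 p22 g1 g2) (fun z => (hQ z, hU11 z)) (q, u11)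
    = pq q * p11 q u11 := by
  rw [distOf_fst_marg _ (fun z => (hQ z, hU11 z)) hU12 (q, u11)]
  have retup : ∀ (x : Qt × U11 × U12),
      distOf (hkJointP W pq p11 p12 p21 p22 g1 g2)
        (fun z => ((hQ z, hU11 z), hU12 z)) ((x.1, x.2.1), x.2.2)
      = distOf (hkJointP W pq p11 p12 p21 p22 g1 g2)
        (fun z => (hQ z, hU11 z, hU12 z)) x := by
    rintro ⟨qv, u11v, u12v⟩
    have he : Function.Injective (fun x : Qt × U11 × U12 => ((x.1, x.2.1), x.2.2)) :=
      Function.LeftInverse.injective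
        (g := fun x : (Qt × U11) × U12 => (x.1.1, x.1.2, x.2))
        (by rintro ⟨a, b, c⟩; rfl)
    exact distOf_comp_inj (hkJointP W pq p11 p12 p21 p22 g1 g2) he
      (fun z => ((hQ z, hU11 z), hU12 z))
      (fun z => (hQ z, hU11 z, hU12 z))
      (fun ω => rfl) (qv, u11v, u12v)
  have : ∀ u12 : U12,
      distOf (hkJointP W pq p11 p12 p21 p22 g1 g2)
        (fun z => ((hQ z, hU11 z), hU12 z)) ((q, u11), u12)
      = p12 q u12 * (pq q * p11 q u11) := by
    intro u12
    rw [retup (q, u11, u12), distM2 W pq p11 p12 p21 p22 g1 g2 hp21 hp22 hW]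
    ring
  simp only [this]
  rw [← Finset.sum_mul, (hp12 q).2, one_mul]


lemma id_a (hp21 : ∀ q, IsPMF (p21 q)) (hp22 : ∀ q, IsPMF (p22 q))
    (hW : ∀ x1 x2, IsPMF (W x1 x2)) :
    condMutInfo (hkJointP W pq p11 p12 p21 p22 g1 g2) (fun z => (hU11 z, hU12 z)) hY1 hQ
    = condMutInfo (hkJointP W pq p11 p12 p21 p22 g1 g2) (fun z => g1 (hU11 z) (hU12 z)) hY1 hQ := by
  rw [condMutInfo_eq, condMutInfo_eq]
  congr 1
  refine condEnt_comp (hkJointP W pq p11 p12 p21 p22 g1 g2) hY1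
    (fun z => ((hU11 z, hU12 z), hQ z)) (fun z => (g1 (hU11 z) (hU12 z), hQ z))
    (fun a : (U11 × U12) × Qt => (g1 a.1.1 a.1.2, a.2)) (fun ω => rfl)
    (fun c y => kY1 W p21 p22 g2 c.1 c.2 y) ?_
  rintro ⟨⟨u11v, u12v⟩, qv⟩ y
  have he_l1 : Function.Injective (fun x : (Qt × U11 × U12) × Y1 => (x.2, ((x.1.2.1, x.1.2.2), x.1.1))) :=
    Function.LeftInverse.injective (g := fun x : Y1 × (U11 × U12) × Qt => ((x.2.2, x.2.1.1, x.2.1.2), x.1)) (by rintro ⟨⟨a, b, c⟩, d⟩; rfl)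
  have l1 : distOf (hkJointP W pq p11 p12 p21 p22 g1 g2) (fun ω => (hY1 ω, ((hU11 ω, hU12 ω), hQ ω))) ((y, ((u11v, u12v), qv)))
      = distOf (hkJointP W pq p11 p12 p21 p22 g1 g2) (fun z => ((hQ z, hU11 z, hU12 z), hY1 z)) (((qv, u11v, u12v), y)) :=
    distOf_comp_inj (hkJointP W pq p11 p12 p21 p22 g1 g2) he_l1 (fun ω => (hY1 ω, ((hU11 ω, hU12 ω), hQ ω))) (fun z => ((hQ z, hU11 z, hU12 z), hY1 z)) (fun ω => rfl) (((qv, u11v, u12v), y))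
  have he_l2 : Function.Injective (fun x : Qt × U11 × U12 => ((x.2.1, x.2.2), x.1)) :=
    Function.LeftInverse.injective (g := fun x : (U11 × U12) × Qt => (x.2, x.1.1, x.1.2)) (by rintro ⟨a, b, c⟩; rfl)
  have l2 : distOf (hkJointP W pq p11 p12 p21 p22 g1 g2) (fun ω => ((hU11 ω, hU12 ω), hQ ω)) (((u11v, u12v), qv))
      = distOf (hkJointP W pq p11 p12 p21 p22 g1 g2) (fun z => (hQ z, hU11 z, hU12 z)) ((qv, u11v, u12v)) :=
    distOf_comp_inj (hkJointP W pq p11 p12 p21 p22 g1 g2) he_l2 (fun ω => ((hU11 ω, hU12 ω), hQ ω)) (fun z => (hQ z, hU11 z, hU12 z)) (fun ω => rfl) ((qv, u11v, u12v))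
  show distOf (hkJointP W pq p11 p12 p21 p22 g1 g2) (fun ω => (hY1 ω, ((hU11 ω, hU12 ω), hQ ω))) (y, ((u11v, u12v), qv))
      = distOf (hkJointP W pq p11 p12 p21 p22 g1 g2) (fun ω => ((hU11 ω, hU12 ω), hQ ω)) ((u11v, u12v), qv)
        * kY1 W p21 p22 g2 (g1 u11v u12v) qv y
  rw [l1, l2, distM1, distM2 W pq p11 p12 p21 p22 g1 g2 hp21 hp22 hW]

lemma id_b (hp21 : ∀ q, IsPMF (p21 q)) (hp22 : ∀ q, IsPMF (p22 q))
    (hW : ∀ x1 x2, IsPMF (W x1 x2)) :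
    condMutInfo (hkJointP W pq p11 p12 p21 p22 g1 g2) hU11 hY1 (fun z => (hU12 z, hQ z))
    = condMutInfo (hkJointP W pq p11 p12 p21 p22 g1 g2) (fun z => g1 (hU11 z) (hU12 z)) hY1 (fun z => (hU12 z, hQ z)) := by
  rw [condMutInfo_eq, condMutInfo_eq]
  congr 1
  refine condEnt_comp (hkJointP W pq p11 p12 p21 p22 g1 g2) hY1
    (fun z => (hU11 z, hU12 z, hQ z)) (fun z => (g1 (hU11 z) (hU12 z), hU12 z, hQ z))
    (fun a : U11 × U12 × Qt => (g1 a.1 a.2.1, a.2)) (fun ω => rfl)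
    (fun c y => kY1 W p21 p22 g2 c.1 c.2.2 y) ?_
  rintro ⟨u11v, u12v, qv⟩ y
  have he_l1 : Function.Injective (fun x : (Qt × U11 × U12) × Y1 => (x.2, (x.1.2.1, x.1.2.2, x.1.1))) :=
    Function.LeftInverse.injective (g := fun x : Y1 × U11 × U12 × Qt => ((x.2.2.2, x.2.1, x.2.2.1), x.1)) (by rintro ⟨⟨a, b, c⟩, d⟩; rfl)
  have l1 : distOf (hkJointP W pq p11 p12 p21 p22 g1 g2) (fun ω => (hY1 ω, (hU11 ω, hU12 ω, hQ ω))) ((y, (u11v, u12v, qv)))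
      = distOf (hkJointP W pq p11 p12 p21 p22 g1 g2) (fun z => ((hQ z, hU11 z, hU12 z), hY1 z)) (((qv, u11v, u12v), y)) :=
    distOf_comp_inj (hkJointP W pq p11 p12 p21 p22 g1 g2) he_l1 (fun ω => (hY1 ω, (hU11 ω, hU12 ω, hQ ω))) (fun z => ((hQ z, hU11 z, hU12 z), hY1 z)) (fun ω => rfl) (((qv, u11v, u12v), y))
  have he_l2 : Function.Injective (fun x : Qt × U11 × U12 => (x.2.1, x.2.2, x.1)) :=
    Function.LeftInverse.injective (g := fun x : U11 × U12 × Qt => (x.2.2, x.1, x.2.1)) (by rintro ⟨a, b, c⟩; rfl)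
  have l2 : distOf (hkJointP W pq p11 p12 p21 p22 g1 g2) (fun ω => (hU11 ω, hU12 ω, hQ ω)) ((u11v, u12v, qv))
      = distOf (hkJointP W pq p11 p12 p21 p22 g1 g2) (fun z => (hQ z, hU11 z, hU12 z)) ((qv, u11v, u12v)) :=
    distOf_comp_inj (hkJointP W pq p11 p12 p21 p22 g1 g2) he_l2 (fun ω => (hU11 ω, hU12 ω, hQ ω)) (fun z => (hQ z, hU11 z, hU12 z)) (fun ω => rfl) ((qv, u11v, u12v))
  show distOf (hkJointP W pq p11 p12 p21 p22 g1 g2) (fun ω => (hY1 ω, (hU11 ω, hU12 ω, hQ ω))) (y, (u11v, u12v, qv))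
      = distOf (hkJointP W pq p11 p12 p21 p22 g1 g2) (fun ω => (hU11 ω, hU12 ω, hQ ω)) (u11v, u12v, qv)
        * kY1 W p21 p22 g2 (g1 u11v u12v) qv y
  rw [l1, l2, distM1, distM2 W pq p11 p12 p21 p22 g1 g2 hp21 hp22 hW]

lemma id_c (hp11 : ∀ q, IsPMF (p11 q)) (hp12 : ∀ q, IsPMF (p12 q))
    (hW : ∀ x1 x2, IsPMF (W x1 x2)) :
    condMutInfo (hkJointP W pq p11 p12 p21 p22 g1 g2) hU12 hY2 (fun z => (hU21 z, hU22 z, hQ z))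
    = condMutInfo (hkJointP W pq p11 p12 p21 p22 g1 g2) hU12 hY2 (fun z => (g2 (hU21 z) (hU22 z), hQ z)) := by
  rw [condMutInfo_eq, condMutInfo_eq]
  have part1 : condEnt (hkJointP W pq p11 p12 p21 p22 g1 g2) hY2 (fun z => (hU21 z, hU22 z, hQ z))
      = condEnt (hkJointP W pq p11 p12 p21 p22 g1 g2) hY2 (fun z => (g2 (hU21 z) (hU22 z), hQ z)) := by
    refine condEnt_comp (hkJointP W pq p11 p12 p21 p22 g1 g2) hY2
      (fun z => (hU21 z, hU22 z, hQ z)) (fun z => (g2 (hU21 z) (hU22 z), hQ z))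
      (fun a : U21 × U22 × Qt => (g2 a.1 a.2.1, a.2.2)) (fun ω => rfl)
      (fun c y => kY2' W p11 p12 g1 c.1 c.2 y) ?_
    rintro ⟨u21v, u22v, qv⟩ y
    have he_l1 : Function.Injective (fun x : (Qt × U21 × U22) × Y2 => (x.2, (x.1.2.1, x.1.2.2, x.1.1))) :=
      Function.LeftInverse.injective (g := fun x : Y2 × U21 × U22 × Qt => ((x.2.2.2, x.2.1, x.2.2.1), x.1)) (by rintro ⟨⟨a, b, c⟩, d⟩; rfl)
    have l1 : distOf (hkJointP W pq p11 p12 p21 p22 g1 g2) (fun ω => (hY2 ω, (hU21 ω, hU22 ω, hQ ω))) ((y, (u21v, u22v, qv)))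
        = distOf (hkJointP W pq p11 p12 p21 p22 g1 g2) (fun z => ((hQ z, hU21 z, hU22 z), hY2 z)) (((qv, u21v, u22v), y)) :=
      distOf_comp_inj (hkJointP W pq p11 p12 p21 p22 g1 g2) he_l1 (fun ω => (hY2 ω, (hU21 ω, hU22 ω, hQ ω))) (fun z => ((hQ z, hU21 z, hU22 z), hY2 z)) (fun ω => rfl) (((qv, u21v, u22v), y))

    have he_l2 : Function.Injective (fun x : Qt × U21 × U22 => (x.2.1, x.2.2, x.1)) :=
      Function.LeftInverse.injective (g := fun x : U21 × U22 × Qt => (x.2.2, x.1, x.2.1)) (by rintro ⟨a, b, c⟩; rfl)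
    have l2 : distOf (hkJointP W pq p11 p12 p21 p22 g1 g2) (fun ω => (hU21 ω, hU22 ω, hQ ω)) ((u21v, u22v, qv))
        = distOf (hkJointP W pq p11 p12 p21 p22 g1 g2) (fun z => (hQ z, hU21 z, hU22 z)) ((qv, u21v, u22v)) :=
      distOf_comp_inj (hkJointP W pq p11 p12 p21 p22 g1 g2) he_l2 (fun ω => (hU21 ω, hU22 ω, hQ ω)) (fun z => (hQ z, hU21 z, hU22 z)) (fun ω => rfl) ((qv, u21v, u22v))

    show distOf (hkJointP W pq p11 p12 p21 p22 g1 g2) (fun ω => (hY2 ω, (hU21 ω, hU22 ω, hQ ω))) (y, (u21v, u22v, qv))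
        = distOf (hkJointP W pq p11 p12 p21 p22 g1 g2) (fun ω => (hU21 ω, hU22 ω, hQ ω)) (u21v, u22v, qv)
          * kY2' W p11 p12 g1 (g2 u21v u22v) qv y
    rw [l1, l2, distM5, distM6 W pq p11 p12 p21 p22 g1 g2 hp11 hp12 hW]
  have part2 : condEnt (hkJointP W pq p11 p12 p21 p22 g1 g2) hY2 (fun z => (hU12 z, (hU21 z, hU22 z, hQ z)))
      = condEnt (hkJointP W pq p11 p12 p21 p22 g1 g2) hY2 (fun z => (hU12 z, (g2 (hU21 z) (hU22 z), hQ z))) := by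
    refine condEnt_comp (hkJointP W pq p11 p12 p21 p22 g1 g2) hY2
      (fun z => (hU12 z, (hU21 z, hU22 z, hQ z)))
      (fun z => (hU12 z, (g2 (hU21 z) (hU22 z), hQ z)))
      (fun a : U12 × U21 × U22 × Qt => (a.1, (g2 a.2.1 a.2.2.1, a.2.2.2))) (fun ω => rfl)
      (fun c y => kY2 W p11 g1 c.1 c.2.1 c.2.2 y) ?_
    rintro ⟨u12v, u21v, u22v, qv⟩ y
    have he_l1 : Function.Injective (fun x : (Qt × U12 × U21 × U22) × Y2 => (x.2, (x.1.2.1, x.1.2.2.1, x.1.2.2.2, x.1.1))) :=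
      Function.LeftInverse.injective (g := fun x : Y2 × U12 × U21 × U22 × Qt => ((x.2.2.2.2, x.2.1, x.2.2.1, x.2.2.2.1), x.1)) (by rintro ⟨⟨a, b, c, d⟩, e⟩; rfl)
    have l1 : distOf (hkJointP W pq p11 p12 p21 p22 g1 g2) (fun ω => (hY2 ω, (hU12 ω, hU21 ω, hU22 ω, hQ ω))) ((y, (u12v, u21v, u22v, qv)))
        = distOf (hkJointP W pq p11 p12 p21 p22 g1 g2) (fun z => ((hQ z, hU12 z, hU21 z, hU22 z), hY2 z)) (((qv, u12v, u21v, u22v), y)) :=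
      distOf_comp_inj (hkJointP W pq p11 p12 p21 p22 g1 g2) he_l1 (fun ω => (hY2 ω, (hU12 ω, hU21 ω, hU22 ω, hQ ω))) (fun z => ((hQ z, hU12 z, hU21 z, hU22 z), hY2 z)) (fun ω => rfl) (((qv, u12v, u21v, u22v), y))

    have he_l2 : Function.Injective (fun x : Qt × U12 × U21 × U22 => (x.2.1, x.2.2.1, x.2.2.2, x.1)) :=
      Function.LeftInverse.injective (g := fun x : U12 × U21 × U22 × Qt => (x.2.2.2, x.1, x.2.1, x.2.2.1)) (by rintro ⟨a, b, c, d⟩; rfl)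
    have l2 : distOf (hkJointP W pq p11 p12 p21 p22 g1 g2) (fun ω => (hU12 ω, hU21 ω, hU22 ω, hQ ω)) ((u12v, u21v, u22v, qv))
        = distOf (hkJointP W pq p11 p12 p21 p22 g1 g2) (fun z => (hQ z, hU12 z, hU21 z, hU22 z)) ((qv, u12v, u21v, u22v)) :=
      distOf_comp_inj (hkJointP W pq p11 p12 p21 p22 g1 g2) he_l2 (fun ω => (hU12 ω, hU21 ω, hU22 ω, hQ ω)) (fun z => (hQ z, hU12 z, hU21 z, hU22 z)) (fun ω => rfl) ((qv, u12v, u21v, u22v))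

    show distOf (hkJointP W pq p11 p12 p21 p22 g1 g2) (fun ω => (hY2 ω, (hU12 ω, hU21 ω, hU22 ω, hQ ω)))
          (y, (u12v, u21v, u22v, qv))
        = distOf (hkJointP W pq p11 p12 p21 p22 g1 g2) (fun ω => (hU12 ω, hU21 ω, hU22 ω, hQ ω)) (u12v, u21v, u22v, qv)
          * kY2 W p11 g1 u12v (g2 u21v u22v) qv y
    rw [l1, l2, distM3, distM4 W pq p11 p12 p21 p22 g1 g2 hp11 hW]
  rw [part1, part2]

lemma id_d (hp11 : ∀ q, IsPMF (p11 q)) (hW : ∀ x1 x2, IsPMF (W x1 x2)) :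
    condMutInfo (hkJointP W pq p11 p12 p21 p22 g1 g2) (fun z => (hU21 z, hU22 z)) hY2 (fun z => (hU12 z, hQ z))
    = condMutInfo (hkJointP W pq p11 p12 p21 p22 g1 g2) (fun z => g2 (hU21 z) (hU22 z)) hY2 (fun z => (hU12 z, hQ z)) := by
  rw [condMutInfo_eq, condMutInfo_eq]
  congr 1
  refine condEnt_comp (hkJointP W pq p11 p12 p21 p22 g1 g2) hY2
    (fun z => ((hU21 z, hU22 z), hU12 z, hQ z))
    (fun z => (g2 (hU21 z) (hU22 z), hU12 z, hQ z))
    (fun a : (U21 × U22) × U12 × Qt => (g2 a.1.1 a.1.2, a.2)) (fun ω => rfl)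
    (fun c y => kY2 W p11 g1 c.2.1 c.1 c.2.2 y) ?_
  rintro ⟨⟨u21v, u22v⟩, u12v, qv⟩ y
  have he_l1 : Function.Injective (fun x : (Qt × U12 × U21 × U22) × Y2 => (x.2, ((x.1.2.2.1, x.1.2.2.2), x.1.2.1, x.1.1))) :=
    Function.LeftInverse.injective (g := fun x : Y2 × (U21 × U22) × U12 × Qt => ((x.2.2.2, x.2.2.1, x.2.1.1, x.2.1.2), x.1)) (by rintro ⟨⟨a, b, c, d⟩, e⟩; rfl)
  have l1 : distOf (hkJointP W pq p11 p12 p21 p22 g1 g2) (fun ω => (hY2 ω, ((hU21 ω, hU22 ω), hU12 ω, hQ ω))) ((y, ((u21v, u22v), u12v, qv)))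
      = distOf (hkJointP W pq p11 p12 p21 p22 g1 g2) (fun z => ((hQ z, hU12 z, hU21 z, hU22 z), hY2 z)) (((qv, u12v, u21v, u22v), y)) :=
    distOf_comp_inj (hkJointP W pq p11 p12 p21 p22 g1 g2) he_l1 (fun ω => (hY2 ω, ((hU21 ω, hU22 ω), hU12 ω, hQ ω))) (fun z => ((hQ z, hU12 z, hU21 z, hU22 z), hY2 z)) (fun ω => rfl) (((qv, u12v, u21v, u22v), y))
  have he_l2 : Function.Injective (fun x : Qt × U12 × U21 × U22 => ((x.2.2.1, x.2.2.2), x.2.1, x.1)) :=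
    Function.LeftInverse.injective (g := fun x : (U21 × U22) × U12 × Qt => (x.2.2, x.2.1, x.1.1, x.1.2)) (by rintro ⟨a, b, c, d⟩; rfl)
  have l2 : distOf (hkJointP W pq p11 p12 p21 p22 g1 g2) (fun ω => ((hU21 ω, hU22 ω), hU12 ω, hQ ω)) (((u21v, u22v), u12v, qv))
      = distOf (hkJointP W pq p11 p12 p21 p22 g1 g2) (fun z => (hQ z, hU12 z, hU21 z, hU22 z)) ((qv, u12v, u21v, u22v)) :=
    distOf_comp_inj (hkJointP W pq p11 p12 p21 p22 g1 g2) he_l2 (fun ω => ((hU21 ω, hU22 ω), hU12 ω, hQ ω)) (fun z => (hQ z, hU12 z, hU21 z, hU22 z)) (fun ω => rfl) ((qv, u12v, u21v, u22v))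
  show distOf (hkJointP W pq p11 p12 p21 p22 g1 g2) (fun ω => (hY2 ω, ((hU21 ω, hU22 ω), hU12 ω, hQ ω)))
        (y, ((u21v, u22v), u12v, qv))
      = distOf (hkJointP W pq p11 p12 p21 p22 g1 g2) (fun ω => ((hU21 ω, hU22 ω), hU12 ω, hQ ω)) ((u21v, u22v), u12v, qv)
        * kY2 W p11 g1 u12v (g2 u21v u22v) qv y
  rw [l1, l2, distM3, distM4 W pq p11 p12 p21 p22 g1 g2 hp11 hW]

lemma id_e (hp11 : ∀ q, IsPMF (p11 q)) (hW : ∀ x1 x2, IsPMF (W x1 x2)) :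
    condMutInfo (hkJointP W pq p11 p12 p21 p22 g1 g2) (fun z => (hU12 z, hU21 z, hU22 z)) hY2 hQ
    = condMutInfo (hkJointP W pq p11 p12 p21 p22 g1 g2) (fun z => (hU12 z, g2 (hU21 z) (hU22 z))) hY2 hQ := by
  rw [condMutInfo_eq, condMutInfo_eq]
  congr 1
  refine condEnt_comp (hkJointP W pq p11 p12 p21 p22 g1 g2) hY2
    (fun z => ((hU12 z, hU21 z, hU22 z), hQ z))
    (fun z => ((hU12 z, g2 (hU21 z) (hU22 z)), hQ z))
    (fun a : (U12 × U21 × U22) × Qt => ((a.1.1, g2 a.1.2.1 a.1.2.2), a.2)) (fun ω => rfl)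
    (fun c y => kY2 W p11 g1 c.1.1 c.1.2 c.2 y) ?_
  rintro ⟨⟨u12v, u21v, u22v⟩, qv⟩ y
  have he_l1 : Function.Injective (fun x : (Qt × U12 × U21 × U22) × Y2 => (x.2, ((x.1.2.1, x.1.2.2.1, x.1.2.2.2), x.1.1))) :=
    Function.LeftInverse.injective (g := fun x : Y2 × (U12 × U21 × U22) × Qt => ((x.2.2, x.2.1.1, x.2.1.2.1, x.2.1.2.2), x.1)) (by rintro ⟨⟨a, b, c, d⟩, e⟩; rfl)
  have l1 : distOf (hkJointP W pq p11 p12 p21 p22 g1 g2) (fun ω => (hY2 ω, ((hU12 ω, hU21 ω, hU22 ω), hQ ω))) ((y, ((u12v, u21v, u22v), qv)))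
      = distOf (hkJointP W pq p11 p12 p21 p22 g1 g2) (fun z => ((hQ z, hU12 z, hU21 z, hU22 z), hY2 z)) (((qv, u12v, u21v, u22v), y)) :=
    distOf_comp_inj (hkJointP W pq p11 p12 p21 p22 g1 g2) he_l1 (fun ω => (hY2 ω, ((hU12 ω, hU21 ω, hU22 ω), hQ ω))) (fun z => ((hQ z, hU12 z, hU21 z, hU22 z), hY2 z)) (fun ω => rfl) (((qv, u12v, u21v, u22v), y))
  have he_l2 : Function.Injective (fun x : Qt × U12 × U21 × U22 => ((x.2.1, x.2.2.1, x.2.2.2), x.1)) :=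
    Function.LeftInverse.injective (g := fun x : (U12 × U21 × U22) × Qt => (x.2, x.1.1, x.1.2.1, x.1.2.2)) (by rintro ⟨a, b, c, d⟩; rfl)
  have l2 : distOf (hkJointP W pq p11 p12 p21 p22 g1 g2) (fun ω => ((hU12 ω, hU21 ω, hU22 ω), hQ ω)) (((u12v, u21v, u22v), qv))
      = distOf (hkJointP W pq p11 p12 p21 p22 g1 g2) (fun z => (hQ z, hU12 z, hU21 z, hU22 z)) ((qv, u12v, u21v, u22v)) :=
    distOf_comp_inj (hkJointP W pq p11 p12 p21 p22 g1 g2) he_l2 (fun ω => ((hU12 ω, hU21 ω, hU22 ω), hQ ω)) (fun z => (hQ z, hU12 z, hU21 z, hU22 z)) (fun ω => rfl) ((qv, u12v, u21v, u22v))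
  show distOf (hkJointP W pq p11 p12 p21 p22 g1 g2) (fun ω => (hY2 ω, ((hU12 ω, hU21 ω, hU22 ω), hQ ω)))
        (y, ((u12v, u21v, u22v), qv))
      = distOf (hkJointP W pq p11 p12 p21 p22 g1 g2) (fun ω => ((hU12 ω, hU21 ω, hU22 ω), hQ ω)) ((u12v, u21v, u22v), qv)
        * kY2 W p11 g1 u12v (g2 u21v u22v) qv y
  rw [l1, l2, distM3, distM4 W pq p11 p12 p21 p22 g1 g2 hp11 hW]

lemma z5 (hp12 : ∀ q, IsPMF (p12 q)) (hp21 : ∀ q, IsPMF (p21 q))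
    (hp22 : ∀ q, IsPMF (p22 q)) (hW : ∀ x1 x2, IsPMF (W x1 x2)) :
    condMutInfo (hkJointP W pq p11 p12 p21 p22 g1 g2) hU11 hU12 hQ = 0 := by
  rw [condMutInfo_eq]
  have key : condEnt (hkJointP W pq p11 p12 p21 p22 g1 g2) hU12 (fun z => (hU11 z, hQ z)) = condEnt (hkJointP W pq p11 p12 p21 p22 g1 g2) hU12 hQ := by
    refine condEnt_comp (hkJointP W pq p11 p12 p21 p22 g1 g2) hU12 (fun z => (hU11 z, hQ z)) hQ
      (fun a : U11 × Qt => a.2) (fun ω => rfl) (fun c y => p12 c y) ?_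
    rintro ⟨u11v, qv⟩ y
    have he_l1 : Function.Injective (fun x : Qt × U11 × U12 => (x.2.2, x.2.1, x.1)) :=
      Function.LeftInverse.injective (g := fun x : U12 × U11 × Qt => (x.2.2, x.2.1, x.1)) (by rintro ⟨a, b, c⟩; rfl)
    have l1 : distOf (hkJointP W pq p11 p12 p21 p22 g1 g2) (fun ω => (hU12 ω, hU11 ω, hQ ω)) ((y, u11v, qv))
        = distOf (hkJointP W pq p11 p12 p21 p22 g1 g2) (fun z => (hQ z, hU11 z, hU12 z)) ((qv, u11v, y)) :=
      distOf_comp_inj (hkJointP W pq p11 p12 p21 p22 g1 g2) he_l1 (fun ω => (hU12 ω, hU11 ω, hQ ω)) (fun z => (hQ z, hU11 z, hU12 z)) (fun ω => rfl) ((qv, u11v, y))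

    have he_l2 : Function.Injective (fun x : Qt × U11 => (x.2, x.1)) :=
      Function.LeftInverse.injective (g := fun x : U11 × Qt => (x.2, x.1)) (by rintro ⟨a, b⟩; rfl)
    have l2 : distOf (hkJointP W pq p11 p12 p21 p22 g1 g2) (fun ω => (hU11 ω, hQ ω)) ((u11v, qv))
        = distOf (hkJointP W pq p11 p12 p21 p22 g1 g2) (fun z => (hQ z, hU11 z)) ((qv, u11v)) :=
      distOf_comp_inj (hkJointP W pq p11 p12 p21 p22 g1 g2) he_l2 (fun ω => (hU11 ω, hQ ω)) (fun z => (hQ z, hU11 z)) (fun ω => rfl) ((qv, u11v))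

    show distOf (hkJointP W pq p11 p12 p21 p22 g1 g2) (fun ω => (hU12 ω, hU11 ω, hQ ω)) (y, u11v, qv)
        = distOf (hkJointP W pq p11 p12 p21 p22 g1 g2) (fun ω => (hU11 ω, hQ ω)) (u11v, qv) * p12 qv y
    rw [l1, l2, distM2 W pq p11 p12 p21 p22 g1 g2 hp21 hp22 hW, distM12 W pq p11 p12 p21 p22 g1 g2 hp12 hp21 hp22 hW]
  rw [key, sub_self]

lemma z4 (hp11 : ∀ q, IsPMF (p11 q)) (hp12 : ∀ q, IsPMF (p12 q))
    (hp22 : ∀ q, IsPMF (p22 q)) (hW : ∀ x1 x2, IsPMF (W x1 x2)) :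
    condMutInfo (hkJointP W pq p11 p12 p21 p22 g1 g2) hU21 hU22 hQ = 0 := by
  rw [condMutInfo_eq]
  have key : condEnt (hkJointP W pq p11 p12 p21 p22 g1 g2) hU22 (fun z => (hU21 z, hQ z)) = condEnt (hkJointP W pq p11 p12 p21 p22 g1 g2) hU22 hQ := by
    refine condEnt_comp (hkJointP W pq p11 p12 p21 p22 g1 g2) hU22 (fun z => (hU21 z, hQ z)) hQ
      (fun a : U21 × Qt => a.2) (fun ω => rfl) (fun c y => p22 c y) ?_
    rintro ⟨u21v, qv⟩ y
    have he_l1 : Function.Injective (fun x : Qt × U21 × U22 => (x.2.2, x.2.1, x.1)) :=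
      Function.LeftInverse.injective (g := fun x : U22 × U21 × Qt => (x.2.2, x.2.1, x.1)) (by rintro ⟨a, b, c⟩; rfl)
    have l1 : distOf (hkJointP W pq p11 p12 p21 p22 g1 g2) (fun ω => (hU22 ω, hU21 ω, hQ ω)) ((y, u21v, qv))
        = distOf (hkJointP W pq p11 p12 p21 p22 g1 g2) (fun z => (hQ z, hU21 z, hU22 z)) ((qv, u21v, y)) :=
      distOf_comp_inj (hkJointP W pq p11 p12 p21 p22 g1 g2) he_l1 (fun ω => (hU22 ω, hU21 ω, hQ ω)) (fun z => (hQ z, hU21 z, hU22 z)) (fun ω => rfl) ((qv, u21v, y))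

    have he_l2 : Function.Injective (fun x : Qt × U21 => (x.2, x.1)) :=
      Function.LeftInverse.injective (g := fun x : U21 × Qt => (x.2, x.1)) (by rintro ⟨a, b⟩; rfl)
    have l2 : distOf (hkJointP W pq p11 p12 p21 p22 g1 g2) (fun ω => (hU21 ω, hQ ω)) ((u21v, qv))
        = distOf (hkJointP W pq p11 p12 p21 p22 g1 g2) (fun z => (hQ z, hU21 z)) ((qv, u21v)) :=
      distOf_comp_inj (hkJointP W pq p11 p12 p21 p22 g1 g2) he_l2 (fun ω => (hU21 ω, hQ ω)) (fun z => (hQ z, hU21 z)) (fun ω => rfl) ((qv, u21v))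

    show distOf (hkJointP W pq p11 p12 p21 p22 g1 g2) (fun ω => (hU22 ω, hU21 ω, hQ ω)) (y, u21v, qv)
        = distOf (hkJointP W pq p11 p12 p21 p22 g1 g2) (fun ω => (hU21 ω, hQ ω)) (u21v, qv) * p22 qv y
    rw [l1, l2, distM6 W pq p11 p12 p21 p22 g1 g2 hp11 hp12 hW, distM10 W pq p11 p12 p21 p22 g1 g2 hp11 hp12 hp22 hW]
  rw [key, sub_self]

lemma z1 (hp11 : ∀ q, IsPMF (p11 q)) (hp22 : ∀ q, IsPMF (p22 q))
    (hW : ∀ x1 x2, IsPMF (W x1 x2)) :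
    condMutInfo (hkJointP W pq p11 p12 p21 p22 g1 g2) hU21 hU22 (fun z => (hU12 z, hQ z)) = 0 := by
  rw [condMutInfo_eq]
  have key : condEnt (hkJointP W pq p11 p12 p21 p22 g1 g2) hU22 (fun z => (hU21 z, hU12 z, hQ z))
      = condEnt (hkJointP W pq p11 p12 p21 p22 g1 g2) hU22 (fun z => (hU12 z, hQ z)) := by
    refine condEnt_comp (hkJointP W pq p11 p12 p21 p22 g1 g2) hU22 (fun z => (hU21 z, hU12 z, hQ z))
      (fun z => (hU12 z, hQ z))
      (fun a : U21 × U12 × Qt => a.2) (fun ω => rfl) (fun c y => p22 c.2 y) ?_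
    rintro ⟨u21v, u12v, qv⟩ y
    have he_l1 : Function.Injective (fun x : Qt × U12 × U21 × U22 => (x.2.2.2, x.2.2.1, x.2.1, x.1)) :=
      Function.LeftInverse.injective (g := fun x : U22 × U21 × U12 × Qt => (x.2.2.2, x.2.2.1, x.2.1, x.1)) (by rintro ⟨a, b, c, d⟩; rfl)
    have l1 : distOf (hkJointP W pq p11 p12 p21 p22 g1 g2) (fun ω => (hU22 ω, hU21 ω, hU12 ω, hQ ω)) ((y, u21v, u12v, qv))
        = distOf (hkJointP W pq p11 p12 p21 p22 g1 g2) (fun z => (hQ z, hU12 z, hU21 z, hU22 z)) ((qv, u12v, u21v, y)) :=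
      distOf_comp_inj (hkJointP W pq p11 p12 p21 p22 g1 g2) he_l1 (fun ω => (hU22 ω, hU21 ω, hU12 ω, hQ ω)) (fun z => (hQ z, hU12 z, hU21 z, hU22 z)) (fun ω => rfl) ((qv, u12v, u21v, y))

    have he_l2 : Function.Injective (fun x : Qt × U12 × U21 => (x.2.2, x.2.1, x.1)) :=
      Function.LeftInverse.injective (g := fun x : U21 × U12 × Qt => (x.2.2, x.2.1, x.1)) (by rintro ⟨a, b, c⟩; rfl)
    have l2 : distOf (hkJointP W pq p11 p12 p21 p22 g1 g2) (fun ω => (hU21 ω, hU12 ω, hQ ω)) ((u21v, u12v, qv))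
        = distOf (hkJointP W pq p11 p12 p21 p22 g1 g2) (fun z => (hQ z, hU12 z, hU21 z)) ((qv, u12v, u21v)) :=
      distOf_comp_inj (hkJointP W pq p11 p12 p21 p22 g1 g2) he_l2 (fun ω => (hU21 ω, hU12 ω, hQ ω)) (fun z => (hQ z, hU12 z, hU21 z)) (fun ω => rfl) ((qv, u12v, u21v))

    show distOf (hkJointP W pq p11 p12 p21 p22 g1 g2) (fun ω => (hU22 ω, hU21 ω, hU12 ω, hQ ω)) (y, u21v, u12v, qv)
        = distOf (hkJointP W pq p11 p12 p21 p22 g1 g2) (fun ω => (hU21 ω, hU12 ω, hQ ω)) (u21v, u12v, qv) * p22 qv y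
    rw [l1, l2, distM4 W pq p11 p12 p21 p22 g1 g2 hp11 hW, distM9 W pq p11 p12 p21 p22 g1 g2 hp11 hp22 hW]
  rw [key, sub_self]

lemma z2 (hp11 : ∀ q, IsPMF (p11 q)) (hp12 : ∀ q, IsPMF (p12 q))
    (hp22 : ∀ q, IsPMF (p22 q)) (hW : ∀ x1 x2, IsPMF (W x1 x2)) :
    condMutInfo (hkJointP W pq p11 p12 p21 p22 g1 g2) hU21 (fun z => (hU12 z, hU22 z)) hQ = 0 := by
  rw [condMutInfo_eq]
  have key : condEnt (hkJointP W pq p11 p12 p21 p22 g1 g2) (fun z => (hU12 z, hU22 z)) (fun z => (hU21 z, hQ z))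
      = condEnt (hkJointP W pq p11 p12 p21 p22 g1 g2) (fun z => (hU12 z, hU22 z)) hQ := by
    refine condEnt_comp (hkJointP W pq p11 p12 p21 p22 g1 g2) (fun z => (hU12 z, hU22 z)) (fun z => (hU21 z, hQ z)) hQ
      (fun a : U21 × Qt => a.2) (fun ω => rfl)
      (fun c y => p12 c y.1 * p22 c y.2) ?_
    rintro ⟨u21v, qv⟩ ⟨u12v, u22v⟩
    have he_l1 : Function.Injective (fun x : Qt × U12 × U21 × U22 => ((x.2.1, x.2.2.2), x.2.2.1, x.1)) :=
      Function.LeftInverse.injective (g := fun x : (U12 × U22) × U21 × Qt => (x.2.2, x.1.1, x.2.1, x.1.2)) (by rintro ⟨a, b, c, d⟩; rfl)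
    have l1 : distOf (hkJointP W pq p11 p12 p21 p22 g1 g2) (fun ω => ((hU12 ω, hU22 ω), hU21 ω, hQ ω)) (((u12v, u22v), u21v, qv))
        = distOf (hkJointP W pq p11 p12 p21 p22 g1 g2) (fun z => (hQ z, hU12 z, hU21 z, hU22 z)) ((qv, u12v, u21v, u22v)) :=
      distOf_comp_inj (hkJointP W pq p11 p12 p21 p22 g1 g2) he_l1 (fun ω => ((hU12 ω, hU22 ω), hU21 ω, hQ ω)) (fun z => (hQ z, hU12 z, hU21 z, hU22 z)) (fun ω => rfl) ((qv, u12v, u21v, u22v))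

    have he_l2 : Function.Injective (fun x : Qt × U21 => (x.2, x.1)) :=
      Function.LeftInverse.injective (g := fun x : U21 × Qt => (x.2, x.1)) (by rintro ⟨a, b⟩; rfl)
    have l2 : distOf (hkJointP W pq p11 p12 p21 p22 g1 g2) (fun ω => (hU21 ω, hQ ω)) ((u21v, qv))
        = distOf (hkJointP W pq p11 p12 p21 p22 g1 g2) (fun z => (hQ z, hU21 z)) ((qv, u21v)) :=
      distOf_comp_inj (hkJointP W pq p11 p12 p21 p22 g1 g2) he_l2 (fun ω => (hU21 ω, hQ ω)) (fun z => (hQ z, hU21 z)) (fun ω => rfl) ((qv, u21v))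

    show distOf (hkJointP W pq p11 p12 p21 p22 g1 g2) (fun ω => ((hU12 ω, hU22 ω), hU21 ω, hQ ω)) ((u12v, u22v), u21v, qv)
        = distOf (hkJointP W pq p11 p12 p21 p22 g1 g2) (fun ω => (hU21 ω, hQ ω)) (u21v, qv) * (p12 qv u12v * p22 qv u22v)
    rw [l1, l2, distM4 W pq p11 p12 p21 p22 g1 g2 hp11 hW, distM10 W pq p11 p12 p21 p22 g1 g2 hp11 hp12 hp22 hW]
    ring
  rw [key, sub_self]

lemma z3 (hp11 : ∀ q, IsPMF (p11 q)) (hp12 : ∀ q, IsPMF (p12 q))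
    (hp21 : ∀ q, IsPMF (p21 q)) (hW : ∀ x1 x2, IsPMF (W x1 x2)) :
    condMutInfo (hkJointP W pq p11 p12 p21 p22 g1 g2) hU22 (fun z => (hU12 z, hU21 z)) hQ = 0 := by
  rw [condMutInfo_eq]
  have key : condEnt (hkJointP W pq p11 p12 p21 p22 g1 g2) (fun z => (hU12 z, hU21 z)) (fun z => (hU22 z, hQ z))
      = condEnt (hkJointP W pq p11 p12 p21 p22 g1 g2) (fun z => (hU12 z, hU21 z)) hQ := by
    refine condEnt_comp (hkJointP W pq p11 p12 p21 p22 g1 g2) (fun z => (hU12 z, hU21 z)) (fun z => (hU22 z, hQ z)) hQ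
      (fun a : U22 × Qt => a.2) (fun ω => rfl)
      (fun c y => p12 c y.1 * p21 c y.2) ?_
    rintro ⟨u22v, qv⟩ ⟨u12v, u21v⟩
    have he_l1 : Function.Injective (fun x : Qt × U12 × U21 × U22 => ((x.2.1, x.2.2.1), x.2.2.2, x.1)) :=
      Function.LeftInverse.injective (g := fun x : (U12 × U21) × U22 × Qt => (x.2.2, x.1.1, x.1.2, x.2.1)) (by rintro ⟨a, b, c, d⟩; rfl)
    have l1 : distOf (hkJointP W pq p11 p12 p21 p22 g1 g2) (fun ω => ((hU12 ω, hU21 ω), hU22 ω, hQ ω)) (((u12v, u21v), u22v, qv))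
        = distOf (hkJointP W pq p11 p12 p21 p22 g1 g2) (fun z => (hQ z, hU12 z, hU21 z, hU22 z)) ((qv, u12v, u21v, u22v)) :=
      distOf_comp_inj (hkJointP W pq p11 p12 p21 p22 g1 g2) he_l1 (fun ω => ((hU12 ω, hU21 ω), hU22 ω, hQ ω)) (fun z => (hQ z, hU12 z, hU21 z, hU22 z)) (fun ω => rfl) ((qv, u12v, u21v, u22v))

    have he_l2 : Function.Injective (fun x : Qt × U22 => (x.2, x.1)) :=
      Function.LeftInverse.injective (g := fun x : U22 × Qt => (x.2, x.1)) (by rintro ⟨a, b⟩; rfl)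
    have l2 : distOf (hkJointP W pq p11 p12 p21 p22 g1 g2) (fun ω => (hU22 ω, hQ ω)) ((u22v, qv))
        = distOf (hkJointP W pq p11 p12 p21 p22 g1 g2) (fun z => (hQ z, hU22 z)) ((qv, u22v)) :=
      distOf_comp_inj (hkJointP W pq p11 p12 p21 p22 g1 g2) he_l2 (fun ω => (hU22 ω, hQ ω)) (fun z => (hQ z, hU22 z)) (fun ω => rfl) ((qv, u22v))

    show distOf (hkJointP W pq p11 p12 p21 p22 g1 g2) (fun ω => ((hU12 ω, hU21 ω), hU22 ω, hQ ω)) ((u12v, u21v), u22v, qv)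
        = distOf (hkJointP W pq p11 p12 p21 p22 g1 g2) (fun ω => (hU22 ω, hQ ω)) (u22v, qv) * (p12 qv u12v * p21 qv u21v)
    rw [l1, l2, distM4 W pq p11 p12 p21 p22 g1 g2 hp11 hW, distM11 W pq p11 p12 p21 p22 g1 g2 hp11 hp12 hp21 hW]
    ring
  rw [key, sub_self]

lemma hkJointP_isPMF (hpq : IsPMF pq) (hp11 : ∀ q, IsPMF (p11 q))
    (hp12 : ∀ q, IsPMF (p12 q)) (hp21 : ∀ q, IsPMF (p21 q)) (hp22 : ∀ q, IsPMF (p22 q))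
    (hW : ∀ x1 x2, IsPMF (W x1 x2)) : IsPMF (hkJointP W pq p11 p12 p21 p22 g1 g2) := by
  constructor
  · intro z
    exact mul_nonneg (mul_nonneg (mul_nonneg (mul_nonneg (mul_nonneg (hpq.1 _)
      ((hp11 _).1 _)) ((hp12 _).1 _)) ((hp21 _).1 _)) ((hp22 _).1 _)) ((hW _ _).1 _)
  · have s11 : ∀ q, ∑ u11, p11 q u11 = 1 := fun q => (hp11 q).2
    have s12 : ∀ q, ∑ u12, p12 q u12 = 1 := fun q => (hp12 q).2
    rw [← sum_distOf (hkJointP W pq p11 p12 p21 p22 g1 g2) (fun z => (hQ z, hU11 z, hU12 z))]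
    simp only [Fintype.sum_prod_type]
    simp only [distM2 W pq p11 p12 p21 p22 g1 g2 hp21 hp22 hW]
    simp only [← Finset.mul_sum]
    simp only [s12, mul_one]
    simp only [← Finset.mul_sum]
    simp only [s11, mul_one]
    exact hpq.2

/-- **Fourier–Motzkin step in the proof of Corollary 1** (case `S1 = {11, 12}`,
`S2 = {12, 21, 22}`): the projection `(R11, R12, R21, R22) ↦ (R11 + R12, R21 + R22)` of the
set of nonnegative rate tuples satisfying the MAC constraints of receiver 1 over
`S1 = {11, 12}` and of receiver 2 over `S2 = {12, 21, 22}` equals the stated region. -/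
theorem fourier_motzkin_step
    (hpq : IsPMF pq) (hp11 : ∀ q, IsPMF (p11 q)) (hp12 : ∀ q, IsPMF (p12 q))
    (hp21 : ∀ q, IsPMF (p21 q)) (hp22 : ∀ q, IsPMF (p22 q))
    (hW : ∀ x1 x2, IsPMF (W x1 x2)) (R1 R2 : ℝ) :
    (∃ R11 R12 R21 R22 : ℝ, 0 ≤ R11 ∧ 0 ≤ R12 ∧ 0 ≤ R21 ∧ 0 ≤ R22 ∧
      R1 = R11 + R12 ∧ R2 = R21 + R22 ∧
      -- (i) receiver 1, S1 = {11, 12}: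
      R11 ≤ condMutInfo (hkJointP W pq p11 p12 p21 p22 g1 g2) hU11 hY1
        (fun z => (hU12 z, hQ z)) ∧
      R12 ≤ condMutInfo (hkJointP W pq p11 p12 p21 p22 g1 g2) hU12 hY1
        (fun z => (hU11 z, hQ z)) ∧
      R11 + R12 ≤ condMutInfo (hkJointP W pq p11 p12 p21 p22 g1 g2)
        (fun z => (hU11 z, hU12 z)) hY1 hQ ∧
      -- (ii) receiver 2, S2 = {12, 21, 22}:
      R12 ≤ condMutInfo (hkJointP W pq p11 p12 p21 p22 g1 g2) hU12 hY2
        (fun z => (hU21 z, hU22 z, hQ z)) ∧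
      R21 ≤ condMutInfo (hkJointP W pq p11 p12 p21 p22 g1 g2) hU21 hY2
        (fun z => (hU12 z, hU22 z, hQ z)) ∧
      R22 ≤ condMutInfo (hkJointP W pq p11 p12 p21 p22 g1 g2) hU22 hY2
        (fun z => (hU12 z, hU21 z, hQ z)) ∧
      R12 + R21 ≤ condMutInfo (hkJointP W pq p11 p12 p21 p22 g1 g2)
        (fun z => (hU12 z, hU21 z)) hY2 (fun z => (hU22 z, hQ z)) ∧
      R12 + R22 ≤ condMutInfo (hkJointP W pq p11 p12 p21 p22 g1 g2)
        (fun z => (hU12 z, hU22 z)) hY2 (fun z => (hU21 z, hQ z)) ∧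
      R21 + R22 ≤ condMutInfo (hkJointP W pq p11 p12 p21 p22 g1 g2)
        (fun z => (hU21 z, hU22 z)) hY2 (fun z => (hU12 z, hQ z)) ∧
      R12 + R21 + R22 ≤ condMutInfo (hkJointP W pq p11 p12 p21 p22 g1 g2)
        (fun z => (hU12 z, hU21 z, hU22 z)) hY2 hQ) ↔
    (0 ≤ R1 ∧ 0 ≤ R2 ∧
      R1 ≤ condMutInfo (hkJointP W pq p11 p12 p21 p22 g1 g2)
        (fun z => g1 (hU11 z) (hU12 z)) hY1 hQ ∧
      R1 ≤ condMutInfo (hkJointP W pq p11 p12 p21 p22 g1 g2)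
          (fun z => g1 (hU11 z) (hU12 z)) hY1 (fun z => (hU12 z, hQ z)) +
        condMutInfo (hkJointP W pq p11 p12 p21 p22 g1 g2) hU12 hY2
          (fun z => (g2 (hU21 z) (hU22 z), hQ z)) ∧
      R2 ≤ condMutInfo (hkJointP W pq p11 p12 p21 p22 g1 g2)
        (fun z => g2 (hU21 z) (hU22 z)) hY2 (fun z => (hU12 z, hQ z)) ∧
      R1 + R2 ≤ condMutInfo (hkJointP W pq p11 p12 p21 p22 g1 g2)
          (fun z => g1 (hU11 z) (hU12 z)) hY1 (fun z => (hU12 z, hQ z)) +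
        condMutInfo (hkJointP W pq p11 p12 p21 p22 g1 g2)
          (fun z => (hU12 z, g2 (hU21 z) (hU22 z))) hY2 hQ) := by
  have hpmf : IsPMF (hkJointP W pq p11 p12 p21 p22 g1 g2) := hkJointP_isPMF W pq p11 p12 p21 p22 g1 g2 hpq hp11 hp12 hp21 hp22 hW
  rw [← id_a W pq p11 p12 p21 p22 g1 g2 hp21 hp22 hW,
    ← id_b W pq p11 p12 p21 p22 g1 g2 hp21 hp22 hW,
    ← id_c W pq p11 p12 p21 p22 g1 g2 hp11 hp12 hW,
    ← id_d W pq p11 p12 p21 p22 g1 g2 hp11 hW,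
    ← id_e W pq p11 p12 p21 p22 g1 g2 hp11 hW]
  -- zero mutual informations coming from the product structure
  have z5h := z5 W pq p11 p12 p21 p22 g1 g2 hp12 hp21 hp22 hW
  have z4h := z4 W pq p11 p12 p21 p22 g1 g2 hp11 hp12 hp22 hW
  have z1h := z1 W pq p11 p12 p21 p22 g1 g2 hp11 hp22 hW
  have z2h := z2 W pq p11 p12 p21 p22 g1 g2 hp11 hp12 hp22 hW
  have z3h := z3 W pq p11 p12 p21 p22 g1 g2 hp11 hp12 hp21 hW
  -- nonnegativity facts
  have na1 : 0 ≤ condMutInfo (hkJointP W pq p11 p12 p21 p22 g1 g2) hU11 hY1 (fun z => (hU12 z, hQ z)) :=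
    condMutInfo_nonneg _ hpmf _ _ _
  have na2 : 0 ≤ condMutInfo (hkJointP W pq p11 p12 p21 p22 g1 g2) hU12 hY1 (fun z => (hU11 z, hQ z)) :=
    condMutInfo_nonneg _ hpmf _ _ _
  have nb2 : 0 ≤ condMutInfo (hkJointP W pq p11 p12 p21 p22 g1 g2) hU12 hY2 (fun z => (hU21 z, hU22 z, hQ z)) :=
    condMutInfo_nonneg _ hpmf _ _ _
  have nb3 : 0 ≤ condMutInfo (hkJointP W pq p11 p12 p21 p22 g1 g2) hU21 hY2 (fun z => (hU12 z, hU22 z, hQ z)) :=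
    condMutInfo_nonneg _ hpmf _ _ _
  have nb4 : 0 ≤ condMutInfo (hkJointP W pq p11 p12 p21 p22 g1 g2) hU22 hY2 (fun z => (hU12 z, hU21 z, hQ z)) :=
    condMutInfo_nonneg _ hpmf _ _ _
  have nx1 : 0 ≤ condMutInfo (hkJointP W pq p11 p12 p21 p22 g1 g2) hU12 hY2 hQ := condMutInfo_nonneg _ hpmf _ _ _
  have nx2 : 0 ≤ condMutInfo (hkJointP W pq p11 p12 p21 p22 g1 g2) hU12 hY2 (fun z => (hU22 z, hQ z)) :=
    condMutInfo_nonneg _ hpmf _ _ _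
  have nx3 : 0 ≤ condMutInfo (hkJointP W pq p11 p12 p21 p22 g1 g2) hU12 hY2 (fun z => (hU21 z, hQ z)) :=
    condMutInfo_nonneg _ hpmf _ _ _
  have nx4 : 0 ≤ condMutInfo (hkJointP W pq p11 p12 p21 p22 g1 g2) hU21 hY2 (fun z => (hU22 z, hQ z)) :=
    condMutInfo_nonneg _ hpmf _ _ _
  have nx5 : 0 ≤ condMutInfo (hkJointP W pq p11 p12 p21 p22 g1 g2) hU22 hY2 (fun z => (hU21 z, hQ z)) :=
    condMutInfo_nonneg _ hpmf _ _ _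
  -- chain rules / relabelings / monotonicity
  have ch1 : condMutInfo (hkJointP W pq p11 p12 p21 p22 g1 g2) (fun z => (hU11 z, hU12 z)) hY1 hQ
      = condMutInfo (hkJointP W pq p11 p12 p21 p22 g1 g2) hU11 hY1 hQ
        + condMutInfo (hkJointP W pq p11 p12 p21 p22 g1 g2) hU12 hY1 (fun z => (hU11 z, hQ z)) :=
    condMutInfo_chain _ hU11 hU12 hY1 hQ
  have mo1 : condMutInfo (hkJointP W pq p11 p12 p21 p22 g1 g2) hU11 hY1 hQ
      ≤ condMutInfo (hkJointP W pq p11 p12 p21 p22 g1 g2) hU11 hY1 (fun z => (hU12 z, hQ z)) :=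
    condMutInfo_mono _ hpmf hU11 hY1 hU12 hQ z5h
  have ch2 : condMutInfo (hkJointP W pq p11 p12 p21 p22 g1 g2) (fun z => (hU12 z, hU21 z, hU22 z)) hY2 hQ
      = condMutInfo (hkJointP W pq p11 p12 p21 p22 g1 g2) hU12 hY2 hQ
        + condMutInfo (hkJointP W pq p11 p12 p21 p22 g1 g2) (fun z => (hU21 z, hU22 z)) hY2 (fun z => (hU12 z, hQ z)) :=
    condMutInfo_chain _ hU12 (fun z => (hU21 z, hU22 z)) hY2 hQ
  have sw23 : condMutInfo (hkJointP W pq p11 p12 p21 p22 g1 g2) (fun z => (hU12 z, hU21 z)) hY2 (fun z => (hU22 z, hQ z))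
      = condMutInfo (hkJointP W pq p11 p12 p21 p22 g1 g2) (fun z => (hU21 z, hU12 z)) hY2 (fun z => (hU22 z, hQ z)) :=
    condMutInfo_congr _ (fun z => (hU21 z, hU12 z)) hY2 (fun z => (hU22 z, hQ z))
      (fun z => (hU12 z, hU21 z)) hY2 (fun z => (hU22 z, hQ z))
      (e1 := Prod.swap) (e2 := id) (e3 := id) Prod.swap_injective Function.injective_id
      Function.injective_id (fun ω => rfl) (fun ω => rfl) (fun ω => rfl)
  have ch3 : condMutInfo (hkJointP W pq p11 p12 p21 p22 g1 g2) (fun z => (hU21 z, hU12 z)) hY2 (fun z => (hU22 z, hQ z))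
      = condMutInfo (hkJointP W pq p11 p12 p21 p22 g1 g2) hU21 hY2 (fun z => (hU22 z, hQ z))
        + condMutInfo (hkJointP W pq p11 p12 p21 p22 g1 g2) hU12 hY2 (fun z => (hU21 z, hU22 z, hQ z)) :=
    condMutInfo_chain _ hU21 hU12 hY2 (fun z => (hU22 z, hQ z))
  have ch4 : condMutInfo (hkJointP W pq p11 p12 p21 p22 g1 g2) (fun z => (hU12 z, hU21 z)) hY2 (fun z => (hU22 z, hQ z))
      = condMutInfo (hkJointP W pq p11 p12 p21 p22 g1 g2) hU12 hY2 (fun z => (hU22 z, hQ z))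
        + condMutInfo (hkJointP W pq p11 p12 p21 p22 g1 g2) hU21 hY2 (fun z => (hU12 z, hU22 z, hQ z)) :=
    condMutInfo_chain _ hU12 hU21 hY2 (fun z => (hU22 z, hQ z))
  have ch5 : condMutInfo (hkJointP W pq p11 p12 p21 p22 g1 g2) (fun z => (hU12 z, hU22 z)) hY2 (fun z => (hU21 z, hQ z))
      = condMutInfo (hkJointP W pq p11 p12 p21 p22 g1 g2) hU12 hY2 (fun z => (hU21 z, hQ z))
        + condMutInfo (hkJointP W pq p11 p12 p21 p22 g1 g2) hU22 hY2 (fun z => (hU12 z, hU21 z, hQ z)) :=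
    condMutInfo_chain _ hU12 hU22 hY2 (fun z => (hU21 z, hQ z))
  have sw24 : condMutInfo (hkJointP W pq p11 p12 p21 p22 g1 g2) (fun z => (hU12 z, hU22 z)) hY2 (fun z => (hU21 z, hQ z))
      = condMutInfo (hkJointP W pq p11 p12 p21 p22 g1 g2) (fun z => (hU22 z, hU12 z)) hY2 (fun z => (hU21 z, hQ z)) :=
    condMutInfo_congr _ (fun z => (hU22 z, hU12 z)) hY2 (fun z => (hU21 z, hQ z))
      (fun z => (hU12 z, hU22 z)) hY2 (fun z => (hU21 z, hQ z))
      (e1 := Prod.swap) (e2 := id) (e3 := id) Prod.swap_injective Function.injective_id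
      Function.injective_id (fun ω => rfl) (fun ω => rfl) (fun ω => rfl)
  have ch6 : condMutInfo (hkJointP W pq p11 p12 p21 p22 g1 g2) (fun z => (hU22 z, hU12 z)) hY2 (fun z => (hU21 z, hQ z))
      = condMutInfo (hkJointP W pq p11 p12 p21 p22 g1 g2) hU22 hY2 (fun z => (hU21 z, hQ z))
        + condMutInfo (hkJointP W pq p11 p12 p21 p22 g1 g2) hU12 hY2 (fun z => (hU22 z, hU21 z, hQ z)) :=
    condMutInfo_chain _ hU22 hU12 hY2 (fun z => (hU21 z, hQ z))
  have swinj : Function.Injective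
      (fun x : U21 × U22 × Qt => ((x.2.1, x.1, x.2.2) : U22 × U21 × Qt)) :=
    Function.LeftInverse.injective
      (g := fun x : U22 × U21 × Qt => ((x.2.1, x.1, x.2.2) : U21 × U22 × Qt))
      (by rintro ⟨a, b, c⟩; rfl)
  have rel1 : condMutInfo (hkJointP W pq p11 p12 p21 p22 g1 g2) hU12 hY2 (fun z => (hU22 z, hU21 z, hQ z))
      = condMutInfo (hkJointP W pq p11 p12 p21 p22 g1 g2) hU12 hY2 (fun z => (hU21 z, hU22 z, hQ z)) :=
    condMutInfo_congr _ hU12 hY2 (fun z => (hU21 z, hU22 z, hQ z))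
      hU12 hY2 (fun z => (hU22 z, hU21 z, hQ z))
      (e1 := id) (e2 := id) Function.injective_id Function.injective_id swinj
      (fun ω => rfl) (fun ω => rfl) (fun ω => rfl)
  have ch7 : condMutInfo (hkJointP W pq p11 p12 p21 p22 g1 g2) (fun z => (hU21 z, hU22 z)) hY2 (fun z => (hU12 z, hQ z))
      = condMutInfo (hkJointP W pq p11 p12 p21 p22 g1 g2) hU21 hY2 (fun z => (hU12 z, hQ z))
        + condMutInfo (hkJointP W pq p11 p12 p21 p22 g1 g2) hU22 hY2 (fun z => (hU21 z, hU12 z, hQ z)) :=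
    condMutInfo_chain _ hU21 hU22 hY2 (fun z => (hU12 z, hQ z))
  have swinj2 : Function.Injective
      (fun x : U12 × U21 × Qt => ((x.2.1, x.1, x.2.2) : U21 × U12 × Qt)) :=
    Function.LeftInverse.injective
      (g := fun x : U21 × U12 × Qt => ((x.2.1, x.1, x.2.2) : U12 × U21 × Qt))
      (by rintro ⟨a, b, c⟩; rfl)
  have rel2 : condMutInfo (hkJointP W pq p11 p12 p21 p22 g1 g2) hU22 hY2 (fun z => (hU21 z, hU12 z, hQ z))
      = condMutInfo (hkJointP W pq p11 p12 p21 p22 g1 g2) hU22 hY2 (fun z => (hU12 z, hU21 z, hQ z)) :=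
    condMutInfo_congr _ hU22 hY2 (fun z => (hU12 z, hU21 z, hQ z))
      hU22 hY2 (fun z => (hU21 z, hU12 z, hQ z))
      (e1 := id) (e2 := id) Function.injective_id Function.injective_id swinj2
      (fun ω => rfl) (fun ω => rfl) (fun ω => rfl)
  have mo2 : condMutInfo (hkJointP W pq p11 p12 p21 p22 g1 g2) hU21 hY2 (fun z => (hU12 z, hQ z))
      ≤ condMutInfo (hkJointP W pq p11 p12 p21 p22 g1 g2) hU21 hY2 (fun z => (hU22 z, hU12 z, hQ z)) :=
    condMutInfo_mono _ hpmf hU21 hY2 hU22 (fun z => (hU12 z, hQ z)) z1h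
  have swinj3 : Function.Injective
      (fun x : U12 × U22 × Qt => ((x.2.1, x.1, x.2.2) : U22 × U12 × Qt)) :=
    Function.LeftInverse.injective
      (g := fun x : U22 × U12 × Qt => ((x.2.1, x.1, x.2.2) : U12 × U22 × Qt))
      (by rintro ⟨a, b, c⟩; rfl)
  have rel3 : condMutInfo (hkJointP W pq p11 p12 p21 p22 g1 g2) hU21 hY2 (fun z => (hU22 z, hU12 z, hQ z))
      = condMutInfo (hkJointP W pq p11 p12 p21 p22 g1 g2) hU21 hY2 (fun z => (hU12 z, hU22 z, hQ z)) :=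
    condMutInfo_congr _ hU21 hY2 (fun z => (hU12 z, hU22 z, hQ z))
      hU21 hY2 (fun z => (hU22 z, hU12 z, hQ z))
      (e1 := id) (e2 := id) Function.injective_id Function.injective_id swinj3
      (fun ω => rfl) (fun ω => rfl) (fun ω => rfl)
  have swinj4 : Function.Injective
      (fun x : U21 × U12 × U22 => ((x.2.1, x.1, x.2.2) : U12 × U21 × U22)) :=
    Function.LeftInverse.injective
      (g := fun x : U12 × U21 × U22 => ((x.2.1, x.1, x.2.2) : U21 × U12 × U22))
      (by rintro ⟨a, b, c⟩; rfl)
  have sw234a : condMutInfo (hkJointP W pq p11 p12 p21 p22 g1 g2) (fun z => (hU12 z, hU21 z, hU22 z)) hY2 hQ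
      = condMutInfo (hkJointP W pq p11 p12 p21 p22 g1 g2) (fun z => (hU21 z, hU12 z, hU22 z)) hY2 hQ :=
    condMutInfo_congr _ (fun z => (hU21 z, hU12 z, hU22 z)) hY2 hQ
      (fun z => (hU12 z, hU21 z, hU22 z)) hY2 hQ
      (e2 := id) (e3 := id) swinj4 Function.injective_id Function.injective_id
      (fun ω => rfl) (fun ω => rfl) (fun ω => rfl)
  have ch8 : condMutInfo (hkJointP W pq p11 p12 p21 p22 g1 g2) (fun z => (hU21 z, hU12 z, hU22 z)) hY2 hQ
      = condMutInfo (hkJointP W pq p11 p12 p21 p22 g1 g2) hU21 hY2 hQ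
        + condMutInfo (hkJointP W pq p11 p12 p21 p22 g1 g2) (fun z => (hU12 z, hU22 z)) hY2 (fun z => (hU21 z, hQ z)) :=
    condMutInfo_chain _ hU21 (fun z => (hU12 z, hU22 z)) hY2 hQ
  have mo3 : condMutInfo (hkJointP W pq p11 p12 p21 p22 g1 g2) hU21 hY2 hQ
      ≤ condMutInfo (hkJointP W pq p11 p12 p21 p22 g1 g2) hU21 hY2 (fun z => ((hU12 z, hU22 z), hQ z)) :=
    condMutInfo_mono _ hpmf hU21 hY2 (fun z => (hU12 z, hU22 z)) hQ z2h
  have reinj1 : Function.Injective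
      (fun x : U12 × U22 × Qt => (((x.1, x.2.1), x.2.2) : (U12 × U22) × Qt)) :=
    Function.LeftInverse.injective
      (g := fun x : (U12 × U22) × Qt => ((x.1.1, x.1.2, x.2) : U12 × U22 × Qt))
      (by rintro ⟨a, b, c⟩; rfl)
  have rel4 : condMutInfo (hkJointP W pq p11 p12 p21 p22 g1 g2) hU21 hY2 (fun z => ((hU12 z, hU22 z), hQ z))
      = condMutInfo (hkJointP W pq p11 p12 p21 p22 g1 g2) hU21 hY2 (fun z => (hU12 z, hU22 z, hQ z)) :=
    condMutInfo_congr _ hU21 hY2 (fun z => (hU12 z, hU22 z, hQ z))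
      hU21 hY2 (fun z => ((hU12 z, hU22 z), hQ z))
      (e1 := id) (e2 := id) Function.injective_id Function.injective_id reinj1
      (fun ω => rfl) (fun ω => rfl) (fun ω => rfl)
  have mo4 : condMutInfo (hkJointP W pq p11 p12 p21 p22 g1 g2) hU21 hY2 hQ
      ≤ condMutInfo (hkJointP W pq p11 p12 p21 p22 g1 g2) hU21 hY2 (fun z => (hU22 z, hQ z)) :=
    condMutInfo_mono _ hpmf hU21 hY2 hU22 hQ z4h
  have swinj5 : Function.Injective
      (fun x : U22 × U12 × U21 => ((x.2.1, x.2.2, x.1) : U12 × U21 × U22)) :=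
    Function.LeftInverse.injective
      (g := fun x : U12 × U21 × U22 => ((x.2.2, x.1, x.2.1) : U22 × U12 × U21))
      (by rintro ⟨a, b, c⟩; rfl)
  have sw234b : condMutInfo (hkJointP W pq p11 p12 p21 p22 g1 g2) (fun z => (hU12 z, hU21 z, hU22 z)) hY2 hQ
      = condMutInfo (hkJointP W pq p11 p12 p21 p22 g1 g2) (fun z => (hU22 z, hU12 z, hU21 z)) hY2 hQ :=
    condMutInfo_congr _ (fun z => (hU22 z, hU12 z, hU21 z)) hY2 hQ
      (fun z => (hU12 z, hU21 z, hU22 z)) hY2 hQ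
      (e2 := id) (e3 := id) swinj5 Function.injective_id Function.injective_id
      (fun ω => rfl) (fun ω => rfl) (fun ω => rfl)
  have ch9 : condMutInfo (hkJointP W pq p11 p12 p21 p22 g1 g2) (fun z => (hU22 z, hU12 z, hU21 z)) hY2 hQ
      = condMutInfo (hkJointP W pq p11 p12 p21 p22 g1 g2) hU22 hY2 hQ
        + condMutInfo (hkJointP W pq p11 p12 p21 p22 g1 g2) (fun z => (hU12 z, hU21 z)) hY2 (fun z => (hU22 z, hQ z)) :=
    condMutInfo_chain _ hU22 (fun z => (hU12 z, hU21 z)) hY2 hQ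
  have mo5 : condMutInfo (hkJointP W pq p11 p12 p21 p22 g1 g2) hU22 hY2 hQ
      ≤ condMutInfo (hkJointP W pq p11 p12 p21 p22 g1 g2) hU22 hY2 (fun z => ((hU12 z, hU21 z), hQ z)) :=
    condMutInfo_mono _ hpmf hU22 hY2 (fun z => (hU12 z, hU21 z)) hQ z3h
  have reinj2 : Function.Injective
      (fun x : U12 × U21 × Qt => (((x.1, x.2.1), x.2.2) : (U12 × U21) × Qt)) :=
    Function.LeftInverse.injective
      (g := fun x : (U12 × U21) × Qt => ((x.1.1, x.1.2, x.2) : U12 × U21 × Qt))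
      (by rintro ⟨a, b, c⟩; rfl)
  have rel5 : condMutInfo (hkJointP W pq p11 p12 p21 p22 g1 g2) hU22 hY2 (fun z => ((hU12 z, hU21 z), hQ z))
      = condMutInfo (hkJointP W pq p11 p12 p21 p22 g1 g2) hU22 hY2 (fun z => (hU12 z, hU21 z, hQ z)) :=
    condMutInfo_congr _ hU22 hY2 (fun z => (hU12 z, hU21 z, hQ z))
      hU22 hY2 (fun z => ((hU12 z, hU21 z), hQ z))
      (e1 := id) (e2 := id) Function.injective_id Function.injective_id reinj2
      (fun ω => rfl) (fun ω => rfl) (fun ω => rfl)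
  -- abbreviate the ten information quantities
  set a1 := condMutInfo (hkJointP W pq p11 p12 p21 p22 g1 g2) hU11 hY1 (fun z => (hU12 z, hQ z)) with ha1
  set a2 := condMutInfo (hkJointP W pq p11 p12 p21 p22 g1 g2) hU12 hY1 (fun z => (hU11 z, hQ z)) with ha2
  set a12 := condMutInfo (hkJointP W pq p11 p12 p21 p22 g1 g2) (fun z => (hU11 z, hU12 z)) hY1 hQ with ha12
  set b2 := condMutInfo (hkJointP W pq p11 p12 p21 p22 g1 g2) hU12 hY2 (fun z => (hU21 z, hU22 z, hQ z)) with hb2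
  set b3 := condMutInfo (hkJointP W pq p11 p12 p21 p22 g1 g2) hU21 hY2 (fun z => (hU12 z, hU22 z, hQ z)) with hb3
  set b4 := condMutInfo (hkJointP W pq p11 p12 p21 p22 g1 g2) hU22 hY2 (fun z => (hU12 z, hU21 z, hQ z)) with hb4
  set b23 := condMutInfo (hkJointP W pq p11 p12 p21 p22 g1 g2) (fun z => (hU12 z, hU21 z)) hY2 (fun z => (hU22 z, hQ z))
    with hb23
  set b24 := condMutInfo (hkJointP W pq p11 p12 p21 p22 g1 g2) (fun z => (hU12 z, hU22 z)) hY2 (fun z => (hU21 z, hQ z))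
    with hb24
  set b34 := condMutInfo (hkJointP W pq p11 p12 p21 p22 g1 g2) (fun z => (hU21 z, hU22 z)) hY2 (fun z => (hU12 z, hQ z))
    with hb34
  set b234 := condMutInfo (hkJointP W pq p11 p12 p21 p22 g1 g2) (fun z => (hU12 z, hU21 z, hU22 z)) hY2 hQ with hb234
  -- the derived inequalities needed for Fourier–Motzkin
  have fa : a12 ≤ a1 + a2 := by linarith
  have fb1 : b34 ≤ b234 := by linarith
  have fb2 : b2 ≤ b23 := by linarith
  have fb3 : b3 ≤ b23 := by linarith
  have fb4 : b4 ≤ b24 := by linarith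
  have fb5 : b2 ≤ b24 := by linarith
  have fb6 : b34 ≤ b3 + b4 := by linarith
  have fb7 : b234 ≤ b3 + b24 := by linarith
  have fb8 : b234 ≤ b23 + b4 := by linarith
  have fb9 : b2 + b234 ≤ b23 + b24 := by linarith
  constructor
  · rintro ⟨R11, R12, R21, R22, h11, h12, h21, h22, e1, e2, c1, c2, c3, c4, c5, c6, c7,
      c8, c9, c10⟩
    exact ⟨by linarith, by linarith, by linarith, by linarith, by linarith, by linarith⟩
  · rintro ⟨hR1, hR2, t1, t2, t3, t4⟩
    have hA0 : 0 ≤ max 0 (R1 - a1) := le_max_left _ _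
    have hA1 : R1 - a1 ≤ max 0 (R1 - a1) := le_max_right _ _
    have hA2 : max 0 (R1 - a1) ≤ R1 := max_le hR1 (by linarith)
    have hA3 : max 0 (R1 - a1) ≤ a2 := max_le na2 (by linarith)
    have hA4 : max 0 (R1 - a1) ≤ b2 := max_le nb2 (by linarith)
    have hA5 : max 0 (R1 - a1) ≤ b234 - R2 := max_le (by linarith) (by linarith)
    set A := max 0 (R1 - a1) with hAdef
    have hM1 : min b3 (b23 - A) ≤ b3 := min_le_left _ _
    have hM2 : min b3 (b23 - A) ≤ b23 - A := min_le_right _ _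
    have hM0 : 0 ≤ min b3 (b23 - A) := le_min nb3 (by linarith)
    have hkey1 : R2 - min b3 (b23 - A) ≤ b4 := by
      rcases le_total b3 (b23 - A) with h | h
      · rw [min_eq_left h]; linarith
      · rw [min_eq_right h]; linarith
    have hkey2 : A + (R2 - min b3 (b23 - A)) ≤ b24 := by
      rcases le_total b3 (b23 - A) with h | h
      · rw [min_eq_left h]; linarith
      · rw [min_eq_right h]; linarith
    set M := min b3 (b23 - A) with hMdef
    have hN1 : min R2 M ≤ R2 := min_le_left _ _
    have hN2 : min R2 M ≤ M := min_le_right _ _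
    have hN0 : 0 ≤ min R2 M := le_min hR2 hM0
    have hk3 : R2 - min R2 M ≤ b4 := by
      rcases le_total R2 M with h | h
      · rw [min_eq_left h]; linarith
      · rw [min_eq_right h]; linarith
    have hk4 : A + (R2 - min R2 M) ≤ b24 := by
      rcases le_total R2 M with h | h
      · rw [min_eq_left h]; linarith
      · rw [min_eq_right h]; linarith
    set N := min R2 M with hNdef
    refine ⟨R1 - A, A, N, R2 - N, by linarith, hA0, hN0, by linarith, by ring, by ring,
      by linarith, hA3, by linarith, hA4, by linarith, hk3, by linarith, hk4,
      by linarith, by linarith⟩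


end HanKobayashi
end
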